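/- arXiv:2601.00309 — 4 statements merged into one kernel-verified Lean document; each statement's English description precedes it below -/
import Mathlib

section
/- Let r, s be vectors in R^n and σ > 0 such that all entries of r + σ1 and s + σ1 are positive. Define T_σ(r) = (r + σ1)/Z(r) where Z(r) = 1ᵀ(r + σ1), and let Z_min = min(Z(r), Z(s)). Then ‖T_σ(r) − T_σ(s)‖₁ ≤ (2/Z_min)·‖r − s‖₁. -/
open Finset

def IsProb {X : Type*} [Fintype X] (p : X → ℝ) : Prop :=
  (∀ x, 0 ≤ p x) ∧ ∑ x, p x = 1

/-- Normalization constant `Z(r) = 1ᵀ(r + σ1)`. -/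
def Znorm {X : Type*} [Fintype X] (σ : ℝ) (r : X → ℝ) : ℝ := ∑ x, (r x + σ)

/-- Shift-and-normalize map `T_σ(r) = (r + σ1)/Z(r)`. -/
noncomputable def Tshift {X : Type*} [Fintype X] (σ : ℝ) (r : X → ℝ) : X → ℝ :=
  fun x => (r x + σ) / Znorm σ r

/-- ℓ¹ norm of a vector on a finite index type. -/
def l1 {X : Type*} [Fintype X] (v : X → ℝ) : ℝ := ∑ x, |v x|

lemma aux_lip {n : ℕ} (r s : Fin n → ℝ) (σ : ℝ)
    (hZr : 0 < Znorm σ r) (hZs : 0 < Znorm σ s) (hs : ∀ i, 0 < s i + σ) :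
    l1 (fun i => Tshift σ r i - Tshift σ s i) ≤ (2 / Znorm σ r) * l1 (fun i => r i - s i) := by
  have hkey : ∀ i, Tshift σ r i - Tshift σ s i
      = (r i - s i) / Znorm σ r + (s i + σ) * (Znorm σ s - Znorm σ r) / (Znorm σ r * Znorm σ s) := by
    intro i
    simp only [Tshift]
    field_simp
    ring
  have hZdiff : |Znorm σ s - Znorm σ r| ≤ l1 (fun i => r i - s i) := by
    have : Znorm σ s - Znorm σ r = ∑ i, (s i - r i) := by
      simp [Znorm, ← Finset.sum_sub_distrib]
    rw [this]
    calc |∑ i, (s i - r i)| ≤ ∑ i, |s i - r i| := Finset.abs_sum_le_sum_abs _ _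
      _ = l1 (fun i => r i - s i) := by
          simp only [l1]; exact Finset.sum_congr rfl (fun i _ => abs_sub_comm _ _)
  have h1 : l1 (fun i => Tshift σ r i - Tshift σ s i)
      ≤ l1 (fun i => r i - s i) / Znorm σ r
        + |Znorm σ s - Znorm σ r| / Znorm σ r := by
    simp only [l1]
    calc ∑ i, |Tshift σ r i - Tshift σ s i|
        ≤ ∑ i, (|r i - s i| / Znorm σ r
            + (s i + σ) * |Znorm σ s - Znorm σ r| / (Znorm σ r * Znorm σ s)) := by
          apply Finset.sum_le_sum
          intro i _
          rw [hkey i]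
          refine (abs_add_le _ _).trans ?_
          have e1 : |(r i - s i) / Znorm σ r| = |r i - s i| / Znorm σ r := by
            rw [abs_div, abs_of_pos hZr]
          have e2 : |(s i + σ) * (Znorm σ s - Znorm σ r) / (Znorm σ r * Znorm σ s)|
              = (s i + σ) * |Znorm σ s - Znorm σ r| / (Znorm σ r * Znorm σ s) := by
            rw [abs_div, abs_mul, abs_of_pos (hs i), abs_of_pos (mul_pos hZr hZs)]
          rw [e1, e2]
      _ = (∑ i, |r i - s i|) / Znorm σ r
            + (∑ i, (s i + σ)) * |Znorm σ s - Znorm σ r| / (Znorm σ r * Znorm σ s) := by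
          rw [Finset.sum_add_distrib, ← Finset.sum_div, ← Finset.sum_div, ← Finset.sum_mul]
      _ = (∑ i, |r i - s i|) / Znorm σ r
            + |Znorm σ s - Znorm σ r| / Znorm σ r := by
          rw [show (∑ i, (s i + σ)) = Znorm σ s from rfl]
          field_simp
  calc l1 (fun i => Tshift σ r i - Tshift σ s i)
      ≤ l1 (fun i => r i - s i) / Znorm σ r + |Znorm σ s - Znorm σ r| / Znorm σ r := h1
    _ ≤ l1 (fun i => r i - s i) / Znorm σ r + l1 (fun i => r i - s i) / Znorm σ r := by
        gcongr
    _ = (2 / Znorm σ r) * l1 (fun i => r i - s i) := by ring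

lemma l1_sub_comm {n : ℕ} (a b : Fin n → ℝ) :
    l1 (fun i => a i - b i) = l1 (fun i => b i - a i) :=
  Finset.sum_congr rfl (fun i _ => abs_sub_comm _ _)

/-- the shift-and-normalize map is ℓ¹-Lipschitz with constant `2 / Z_min`. -/
theorem stmt0 {n : ℕ} (r s : Fin n → ℝ) (σ : ℝ) (hσ : 0 < σ)
    (hr : ∀ i, 0 < r i + σ) (hs : ∀ i, 0 < s i + σ) :
    l1 (fun i => Tshift σ r i - Tshift σ s i)
      ≤ (2 / min (Znorm σ r) (Znorm σ s)) * l1 (fun i => r i - s i) := by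
  rcases Nat.eq_zero_or_pos n with hn | hn
  · subst hn
    simp [l1]
  · have hZr : 0 < Znorm σ r :=
      Finset.sum_pos (fun i _ => hr i) (by simp [Finset.univ_nonempty_iff, Fin.pos_iff_nonempty.mp hn])
    have hZs : 0 < Znorm σ s :=
      Finset.sum_pos (fun i _ => hs i) (by simp [Finset.univ_nonempty_iff, Fin.pos_iff_nonempty.mp hn])
    rcases le_total (Znorm σ r) (Znorm σ s) with h | h
    · rw [min_eq_left h]
      exact aux_lip r s σ hZr hZs hs
    · rw [min_eq_right h, l1_sub_comm, l1_sub_comm r s]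
      exact aux_lip s r σ hZs hZr hr
end

section
/- Suppose for each i ∈ {1,…,K}, ‖r̂_i − r*‖₁ ≤ ε_i, all entries of r̂_i + σ1 and r* + σ1 are positive, and p_i = T_σ(r̂_i), p* = T_σ(r*) on a finite metric space of diameter D with Z_min = min(min_i Z(r̂_i), Z(r*)). If p̄ is the W₂ barycenter of {p_i} with weights α ∈ Δ_K, then W₂(p̄, p*) ≤ (2D/√Z_min)·(Σ_i α_i ε_i)^{1/2}. -/
open Finset

def IsCoupling {X : Type*} [Fintype X] (γ : X → X → ℝ) (μ ν : X → ℝ) : Prop :=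
  (∀ x y, 0 ≤ γ x y) ∧ (∀ x, ∑ y, γ x y = μ x) ∧ (∀ y, ∑ x, γ x y = ν y)

/-- Squared 2-Wasserstein distance on a finite metric space. -/
noncomputable def W2sq {X : Type*} [Fintype X] [MetricSpace X] (μ ν : X → ℝ) : ℝ :=
  sInf {c | ∃ γ, IsCoupling γ μ ν ∧ c = ∑ x, ∑ y, dist x y ^ 2 * γ x y}

/-- 2-Wasserstein distance. -/
noncomputable def W2 {X : Type*} [Fintype X] [MetricSpace X] (μ ν : X → ℝ) : ℝ :=
  Real.sqrt (W2sq μ ν)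

section basics
variable {X : Type*} [Fintype X] [MetricSpace X]

lemma cost_nonneg (γ : X → X → ℝ) (h : ∀ x y, 0 ≤ γ x y) :
    0 ≤ ∑ x, ∑ y, dist x y ^ 2 * γ x y :=
  Finset.sum_nonneg fun x _ => Finset.sum_nonneg fun y _ =>
    mul_nonneg (sq_nonneg _) (h x y)

lemma W2sq_bddBelow (μ ν : X → ℝ) :
    BddBelow {c | ∃ γ, IsCoupling γ μ ν ∧ c = ∑ x, ∑ y, dist x y ^ 2 * γ x y} :=
  ⟨0, by rintro c ⟨γ, hγ, rfl⟩; exact cost_nonneg γ hγ.1⟩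

lemma W2sq_set_nonempty (μ ν : X → ℝ) (hμ : IsProb μ) (hν : IsProb ν) :
    {c | ∃ γ, IsCoupling γ μ ν ∧ c = ∑ x, ∑ y, dist x y ^ 2 * γ x y}.Nonempty := by
  refine ⟨_, fun x y => μ x * ν y, ⟨fun x y => mul_nonneg (hμ.1 x) (hν.1 y), fun x => ?_, fun y => ?_⟩, rfl⟩
  · rw [← Finset.mul_sum, hν.2, mul_one]
  · rw [← Finset.sum_mul, hμ.2, one_mul]

lemma W2sq_nonneg (μ ν : X → ℝ) (hμ : IsProb μ) (hν : IsProb ν) : 0 ≤ W2sq μ ν :=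
  le_csInf (W2sq_set_nonempty μ ν hμ hν) (by rintro c ⟨γ, hγ, rfl⟩; exact cost_nonneg γ hγ.1)

lemma W2sq_le_cost (μ ν : X → ℝ) (γ : X → X → ℝ) (hγ : IsCoupling γ μ ν) :
    W2sq μ ν ≤ ∑ x, ∑ y, dist x y ^ 2 * γ x y :=
  csInf_le (W2sq_bddBelow μ ν) ⟨γ, hγ, rfl⟩

lemma W2sq_symm (μ ν : X → ℝ) : W2sq μ ν = W2sq ν μ := by
  unfold W2sq
  congr 1
  ext c
  constructor <;> rintro ⟨γ, ⟨h0, h1, h2⟩, rfl⟩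
  · exact ⟨fun x y => γ y x, ⟨fun x y => h0 y x, h2, h1⟩, by
      rw [Finset.sum_comm]; exact Finset.sum_congr rfl fun x _ =>
        Finset.sum_congr rfl fun y _ => by rw [dist_comm]⟩
  · exact ⟨fun x y => γ y x, ⟨fun x y => h0 y x, h2, h1⟩, by
      rw [Finset.sum_comm]; exact Finset.sum_congr rfl fun x _ =>
        Finset.sum_congr rfl fun y _ => by rw [dist_comm]⟩

end basics

lemma W2sq_le_tv {X : Type*} [Fintype X] [MetricSpace X] (μ ν : X → ℝ)
    (hμ : IsProb μ) (hν : IsProb ν) (D : ℝ) (hD : ∀ x y : X, dist x y ≤ D) :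
    W2sq μ ν ≤ D ^ 2 / 2 * l1 (fun x => μ x - ν x) := by
  classical
  set a : X → ℝ := fun x => max (μ x - ν x) 0 with ha
  set b : X → ℝ := fun x => max (ν x - μ x) 0 with hb
  set m : X → ℝ := fun x => min (μ x) (ν x) with hm
  have ha0 : ∀ x, 0 ≤ a x := fun x => le_max_right _ _
  have hb0 : ∀ x, 0 ≤ b x := fun x => le_max_right _ _
  have hm0 : ∀ x, 0 ≤ m x := fun x => le_min (hμ.1 x) (hν.1 x)
  have hma : ∀ x, m x + a x = μ x := by
    intro x
    rcases le_total (μ x) (ν x) with h | h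
    · rw [ha, hm]; simp only; rw [min_eq_left h, max_eq_right (by linarith)]; ring
    · rw [ha, hm]; simp only; rw [min_eq_right h, max_eq_left (by linarith)]; ring
  have hmb : ∀ x, m x + b x = ν x := by
    intro x
    rcases le_total (μ x) (ν x) with h | h
    · rw [hb, hm]; simp only; rw [min_eq_left h, max_eq_left (by linarith)]; ring
    · rw [hb, hm]; simp only; rw [min_eq_right h, max_eq_right (by linarith)]; ring
  have habs : ∀ x, |μ x - ν x| = a x + b x := by
    intro x
    rcases le_total (μ x) (ν x) with h | h
    · rw [abs_of_nonpos (by linarith), ha, hb]; simp only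
      rw [max_eq_right (by linarith), max_eq_left (by linarith)]; ring
    · rw [abs_of_nonneg (by linarith), ha, hb]; simp only
      rw [max_eq_left (by linarith), max_eq_right (by linarith)]; ring
  set δ := ∑ x, a x with hδ
  have hδ0 : 0 ≤ δ := Finset.sum_nonneg fun x _ => ha0 x
  have hδb : ∑ x, b x = δ := by
    have h1 : ∑ x, (m x + a x) = 1 := by simp only [hma]; exact hμ.2
    have h2 : ∑ x, (m x + b x) = 1 := by simp only [hmb]; exact hν.2
    rw [Finset.sum_add_distrib] at h1 h2
    linarith
  have hl1 : l1 (fun x => μ x - ν x) = 2 * δ := by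
    unfold l1
    simp only [habs]
    rw [Finset.sum_add_distrib, hδb]; ring
  rw [hl1]
  rcases eq_or_lt_of_le hδ0 with h0 | hpos
  · -- δ = 0 : μ = ν, diagonal coupling
    have haz : ∀ x, a x = 0 := by
      intro x
      have := (Finset.sum_eq_zero_iff_of_nonneg (fun x _ => ha0 x)).1 h0.symm
      exact this x (mem_univ x)
    have hbz : ∀ x, b x = 0 := by
      intro x
      have := (Finset.sum_eq_zero_iff_of_nonneg (fun x _ => hb0 x)).1 (hδb.trans h0.symm)
      exact this x (mem_univ x)
    have hμν : ∀ x, μ x = ν x := by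
      intro x; rw [← hma x, ← hmb x, haz, hbz]
    have hcoup : IsCoupling (fun x y => if x = y then μ x else 0) μ ν := by
      refine ⟨fun x y => by dsimp only; split
                            · exact hμ.1 x
                            · exact le_rfl, fun x => ?_, fun y => ?_⟩
      · simp
      · rw [Finset.sum_ite_eq' univ y (fun x => μ x)]
        simp [hμν y]
    calc W2sq μ ν ≤ ∑ x, ∑ y, dist x y ^ 2 * (if x = y then μ x else 0) :=
          W2sq_le_cost μ ν _ hcoup
      _ = 0 := by
          apply Finset.sum_eq_zero
          intro x _
          apply Finset.sum_eq_zero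
          intro y _
          by_cases h : x = y
          · subst h; simp
          · simp [h]
      _ ≤ D ^ 2 / 2 * (2 * δ) := by rw [← h0]; simp
  · -- δ > 0
    set γ : X → X → ℝ := fun x y => (if x = y then m x else 0) + a x * b y / δ with hγdef
    have hcoup : IsCoupling γ μ ν := by
      refine ⟨fun x y => ?_, fun x => ?_, fun y => ?_⟩
      · have : (0:ℝ) ≤ if x = y then m x else 0 := by
          split
          · exact hm0 x
          · exact le_rfl
        have h2 : 0 ≤ a x * b y / δ := by positivity
        exact add_nonneg this h2
      · rw [hγdef]
        simp only
        rw [Finset.sum_add_distrib, Finset.sum_ite_eq univ x (fun _ => m x)]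
        rw [← Finset.sum_div, ← Finset.mul_sum, hδb, mul_div_assoc,
          div_self (ne_of_gt hpos), mul_one]
        simp [hma x]
      · rw [hγdef]
        simp only
        rw [Finset.sum_add_distrib, Finset.sum_ite_eq' univ y m]
        rw [← Finset.sum_div, ← Finset.sum_mul, ← hδ, mul_comm, mul_div_assoc,
          div_self (ne_of_gt hpos), mul_one]
        simp [hmb y]
    calc W2sq μ ν ≤ ∑ x, ∑ y, dist x y ^ 2 * γ x y := W2sq_le_cost μ ν γ hcoup
      _ = ∑ x, ∑ y, dist x y ^ 2 * (a x * b y / δ) := by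
          apply Finset.sum_congr rfl; intro x _
          apply Finset.sum_congr rfl; intro y _
          rw [hγdef]
          by_cases h : x = y
          · subst h; simp
          · simp [h]
      _ ≤ ∑ x, ∑ y, D ^ 2 * (a x * b y / δ) := by
          apply Finset.sum_le_sum; intro x _
          apply Finset.sum_le_sum; intro y _
          apply mul_le_mul_of_nonneg_right _ (by positivity)
          exact pow_le_pow_left₀ dist_nonneg (hD x y) 2
      _ = D ^ 2 * δ := by
          have inner : ∀ x, ∑ y, D ^ 2 * (a x * b y / δ) = D ^ 2 * a x := by
            intro x
            have : ∀ y, D ^ 2 * (a x * b y / δ) = (D ^ 2 * a x / δ) * b y := by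
              intro y; ring
            simp only [this]
            rw [← Finset.mul_sum, hδb, div_mul_eq_mul_div, mul_div_assoc,
              div_self (ne_of_gt hpos), mul_one]
          simp only [inner]
          rw [← Finset.mul_sum, ← hδ]
      _ ≤ D ^ 2 / 2 * (2 * δ) := by ring_nf; exact le_refl _

/-- gluing/triangle-squared inequality through an everywhere-positive middle measure -/
lemma W2sq_triangle {X : Type*} [Fintype X] [MetricSpace X] (μ ν ρ : X → ℝ)
    (hμ : IsProb μ) (hν : IsProb ν) (hρ : IsProb ρ) (hνpos : ∀ x, 0 < ν x) :
    W2sq μ ρ ≤ 2 * W2sq μ ν + 2 * W2sq ν ρ := by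
  classical
  set S1 := {c | ∃ γ, IsCoupling γ μ ν ∧ c = ∑ x, ∑ y, dist x y ^ 2 * γ x y} with hS1
  set S2 := {c | ∃ γ, IsCoupling γ ν ρ ∧ c = ∑ x, ∑ y, dist x y ^ 2 * γ x y} with hS2
  have key : ∀ c1 ∈ S1, ∀ c2 ∈ S2, W2sq μ ρ ≤ 2 * c1 + 2 * c2 := by
    rintro c1 ⟨γ1, hγ1, rfl⟩ c2 ⟨γ2, hγ2, rfl⟩
    set γ : X → X → ℝ := fun x z => ∑ y, γ1 x y * γ2 y z / ν y with hγdef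
    have hcoup : IsCoupling γ μ ρ := by
      refine ⟨fun x z => Finset.sum_nonneg fun y _ =>
        div_nonneg (mul_nonneg (hγ1.1 x y) (hγ2.1 y z)) (hνpos y).le, fun x => ?_, fun z => ?_⟩
      · rw [hγdef]; simp only
        rw [Finset.sum_comm]
        have : ∀ y, ∑ z, γ1 x y * γ2 y z / ν y = γ1 x y := by
          intro y
          have hy : ν y ≠ 0 := ne_of_gt (hνpos y)
          rw [← Finset.sum_div, ← Finset.mul_sum, hγ2.2.1 y]
          field_simp
        simp only [this]
        exact hγ1.2.1 x
      · rw [hγdef]; simp only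
        rw [Finset.sum_comm]
        have : ∀ y, ∑ x, γ1 x y * γ2 y z / ν y = γ2 y z := by
          intro y
          have hy : ν y ≠ 0 := ne_of_gt (hνpos y)
          rw [← Finset.sum_div, ← Finset.sum_mul, hγ1.2.2 y]
          field_simp
        simp only [this]
        exact hγ2.2.2 z
    have step1 : ∑ x, ∑ z, dist x z ^ 2 * γ x z ≤
        ∑ x, ∑ z, ∑ y, (2 * dist x y ^ 2 + 2 * dist y z ^ 2) *
          (γ1 x y * γ2 y z / ν y) := by
      apply Finset.sum_le_sum; intro x _
      apply Finset.sum_le_sum; intro z _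
      rw [hγdef]; simp only
      rw [Finset.mul_sum]
      apply Finset.sum_le_sum; intro y _
      apply mul_le_mul_of_nonneg_right
      · have h1 : dist x z ≤ dist x y + dist y z := dist_triangle x y z
        nlinarith [dist_nonneg (x := x) (y := z), dist_nonneg (x := x) (y := y),
          dist_nonneg (x := y) (y := z), sq_nonneg (dist x y - dist y z)]
      · exact div_nonneg (mul_nonneg (hγ1.1 x y) (hγ2.1 y z)) (hνpos y).le
    have pull : ∀ (f : X → X → X → ℝ), ∑ x, ∑ y, ∑ z, 2 * f x y z
        = 2 * ∑ x, ∑ y, ∑ z, f x y z := by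
      intro f; simp only [Finset.mul_sum]
    have split : ∑ x, ∑ z, ∑ y, (2 * dist x y ^ 2 + 2 * dist y z ^ 2) *
          (γ1 x y * γ2 y z / ν y)
        = 2 * (∑ x, ∑ y, ∑ z, dist x y ^ 2 * (γ1 x y * γ2 y z / ν y))
          + 2 * (∑ y, ∑ z, ∑ x, dist y z ^ 2 * (γ1 x y * γ2 y z / ν y)) := by
      have e : ∀ x z y, (2 * dist x y ^ 2 + 2 * dist y z ^ 2) * (γ1 x y * γ2 y z / ν y)
          = 2 * (dist x y ^ 2 * (γ1 x y * γ2 y z / ν y))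
            + 2 * (dist y z ^ 2 * (γ1 x y * γ2 y z / ν y)) := fun x z y => by ring
      rw [← pull (fun x y z => dist x y ^ 2 * (γ1 x y * γ2 y z / ν y)),
        ← pull (fun y z x => dist y z ^ 2 * (γ1 x y * γ2 y z / ν y))]
      simp only [e, Finset.sum_add_distrib]
      congr 1
      · exact Finset.sum_congr rfl fun x _ => Finset.sum_comm
      · calc ∑ x, ∑ z, ∑ y, 2 * (dist y z ^ 2 * (γ1 x y * γ2 y z / ν y))
            = ∑ x, ∑ y, ∑ z, 2 * (dist y z ^ 2 * (γ1 x y * γ2 y z / ν y)) :=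
              Finset.sum_congr rfl fun x _ => Finset.sum_comm
          _ = ∑ y, ∑ x, ∑ z, 2 * (dist y z ^ 2 * (γ1 x y * γ2 y z / ν y)) := Finset.sum_comm
          _ = ∑ y, ∑ z, ∑ x, 2 * (dist y z ^ 2 * (γ1 x y * γ2 y z / ν y)) :=
              Finset.sum_congr rfl fun y _ => Finset.sum_comm
    have t1 : ∑ x, ∑ y, ∑ z, dist x y ^ 2 * (γ1 x y * γ2 y z / ν y)
        = ∑ x, ∑ y, dist x y ^ 2 * γ1 x y := by
      apply Finset.sum_congr rfl; intro x _
      apply Finset.sum_congr rfl; intro y _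
      have hy : ν y ≠ 0 := ne_of_gt (hνpos y)
      have e : ∀ z, dist x y ^ 2 * (γ1 x y * γ2 y z / ν y)
          = (dist x y ^ 2 * γ1 x y / ν y) * γ2 y z := fun z => by ring
      simp only [e]
      rw [← Finset.mul_sum, hγ2.2.1 y]
      field_simp
    have t2 : ∑ y, ∑ z, ∑ x, dist y z ^ 2 * (γ1 x y * γ2 y z / ν y)
        = ∑ y, ∑ z, dist y z ^ 2 * γ2 y z := by
      apply Finset.sum_congr rfl; intro y _
      apply Finset.sum_congr rfl; intro z _
      have hy : ν y ≠ 0 := ne_of_gt (hνpos y)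
      have e : ∀ x, dist y z ^ 2 * (γ1 x y * γ2 y z / ν y)
          = (dist y z ^ 2 * γ2 y z / ν y) * γ1 x y := fun x => by ring
      simp only [e]
      rw [← Finset.mul_sum, hγ1.2.2 y]
      field_simp
    calc W2sq μ ρ ≤ ∑ x, ∑ z, dist x z ^ 2 * γ x z := W2sq_le_cost μ ρ γ hcoup
      _ ≤ ∑ x, ∑ z, ∑ y, (2 * dist x y ^ 2 + 2 * dist y z ^ 2) *
            (γ1 x y * γ2 y z / ν y) := step1
      _ = 2 * (∑ x, ∑ y, ∑ z, dist x y ^ 2 * (γ1 x y * γ2 y z / ν y))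
            + 2 * (∑ y, ∑ z, ∑ x, dist y z ^ 2 * (γ1 x y * γ2 y z / ν y)) := split
      _ = 2 * (∑ x, ∑ y, dist x y ^ 2 * γ1 x y)
            + 2 * (∑ y, ∑ z, dist y z ^ 2 * γ2 y z) := by rw [t1, t2]
  have hS1ne : S1.Nonempty := W2sq_set_nonempty μ ν hμ hν
  have hS2ne : S2.Nonempty := W2sq_set_nonempty ν ρ hν hρ
  have step1 : ∀ c1 ∈ S1, W2sq μ ρ - 2 * c1 ≤ 2 * W2sq ν ρ := by
    intro c1 hc1
    have h2 : sInf S2 = W2sq ν ρ := rfl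
    have : (W2sq μ ρ - 2 * c1) / 2 ≤ sInf S2 :=
      le_csInf hS2ne fun c2 hc2 => by linarith [key c1 hc1 c2 hc2]
    linarith [this]
  have h1 : sInf S1 = W2sq μ ν := rfl
  have step2 : (W2sq μ ρ - 2 * W2sq ν ρ) / 2 ≤ sInf S1 :=
    le_csInf hS1ne fun c1 hc1 => by linarith [step1 c1 hc1]
  linarith [step2]

lemma Znorm_pos {X : Type*} [Fintype X] [Nonempty X] (σ : ℝ) (r : X → ℝ)
    (hr : ∀ x, 0 < r x + σ) : 0 < Znorm σ r :=
  Finset.sum_pos (fun x _ => hr x) univ_nonempty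

lemma Tshift_isProb {X : Type*} [Fintype X] [Nonempty X] (σ : ℝ) (r : X → ℝ)
    (hr : ∀ x, 0 < r x + σ) : IsProb (Tshift σ r) := by
  have hZ := Znorm_pos σ r hr
  constructor
  · intro x; exact div_nonneg (hr x).le hZ.le
  · unfold Tshift
    rw [← Finset.sum_div]
    exact div_self (ne_of_gt hZ)

lemma Tshift_pos {X : Type*} [Fintype X] [Nonempty X] (σ : ℝ) (r : X → ℝ)
    (hr : ∀ x, 0 < r x + σ) : ∀ x, 0 < Tshift σ r x :=
  fun x => div_pos (hr x) (Znorm_pos σ r hr)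

lemma Tshift_lip {X : Type*} [Fintype X] [Nonempty X] (σ : ℝ) (r r' : X → ℝ)
    (hr : ∀ x, 0 < r x + σ) (hr' : ∀ x, 0 < r' x + σ)
    (Zmin : ℝ) (hZ0 : 0 < Zmin) (hZ : Zmin ≤ Znorm σ r) :
    l1 (fun x => Tshift σ r x - Tshift σ r' x) ≤ 2 / Zmin * l1 (fun x => r x - r' x) := by
  set Z1 := Znorm σ r with hZ1def
  set Z2 := Znorm σ r' with hZ2def
  have hZ1 : 0 < Z1 := Znorm_pos σ r hr
  have hZ2 : 0 < Z2 := Znorm_pos σ r' hr'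
  set L := l1 (fun x => r x - r' x) with hL
  have hL0 : 0 ≤ L := Finset.sum_nonneg fun x _ => abs_nonneg _
  have hZdiff : |Z2 - Z1| ≤ L := by
    have : Z2 - Z1 = ∑ x, (r' x - r x) := by
      rw [hZ1def, hZ2def]; unfold Znorm
      rw [← Finset.sum_sub_distrib]
      exact Finset.sum_congr rfl fun x _ => by ring
    rw [this]
    calc |∑ x, (r' x - r x)| ≤ ∑ x, |r' x - r x| := Finset.abs_sum_le_sum_abs _ _
      _ = L := by
        rw [hL]; unfold l1
        exact Finset.sum_congr rfl fun x _ => by rw [abs_sub_comm]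
  have point : ∀ x, |Tshift σ r x - Tshift σ r' x|
      ≤ |r x - r' x| / Z1 + (r' x + σ) * |Z2 - Z1| / (Z1 * Z2) := by
    intro x
    have e : Tshift σ r x - Tshift σ r' x
        = (r x - r' x) / Z1 + (r' x + σ) * (Z2 - Z1) / (Z1 * Z2) := by
      unfold Tshift
      rw [← hZ1def, ← hZ2def]
      field_simp
      ring
    rw [e]
    calc |(r x - r' x) / Z1 + (r' x + σ) * (Z2 - Z1) / (Z1 * Z2)|
        ≤ |(r x - r' x) / Z1| + |(r' x + σ) * (Z2 - Z1) / (Z1 * Z2)| := abs_add_le _ _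
      _ = |r x - r' x| / Z1 + (r' x + σ) * |Z2 - Z1| / (Z1 * Z2) := by
          rw [abs_div, abs_div, abs_mul, abs_mul, abs_of_pos hZ1, abs_of_pos (hr' x),
            abs_of_pos hZ2]
  calc l1 (fun x => Tshift σ r x - Tshift σ r' x)
      ≤ ∑ x, (|r x - r' x| / Z1 + (r' x + σ) * |Z2 - Z1| / (Z1 * Z2)) :=
        Finset.sum_le_sum fun x _ => point x
    _ = L / Z1 + Z2 * |Z2 - Z1| / (Z1 * Z2) := by
        rw [Finset.sum_add_distrib, ← Finset.sum_div]
        congr 1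
        rw [← Finset.sum_div, ← Finset.sum_mul]
        rfl
    _ = L / Z1 + |Z2 - Z1| / Z1 := by
        congr 1
        field_simp
    _ ≤ L / Z1 + L / Z1 := by gcongr
    _ = 2 * L / Z1 := by ring
    _ ≤ 2 * L / Zmin := by gcongr
    _ = 2 / Zmin * L := by ring

/-- `W₂(p̄, p*) ≤ (2D/√Z_min)·(Σ αᵢ εᵢ)^(1/2)`. -/
theorem stmt5 {X : Type*} [Fintype X] [MetricSpace X] {K : ℕ}
    (σ : ℝ) (hσ : 0 < σ)
    (rhat : Fin K → X → ℝ) (rstar : X → ℝ)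
    (hrhat : ∀ i x, 0 < rhat i x + σ) (hrstar : ∀ x, 0 < rstar x + σ)
    (ε : Fin K → ℝ) (hε : ∀ i, l1 (fun x => rhat i x - rstar x) ≤ ε i)
    (D : ℝ) (hD : ∀ x y : X, dist x y ≤ D) (hD0 : 0 ≤ D)
    (Zmin : ℝ) (hZmin0 : 0 < Zmin)
    (hZmin : ∀ i, Zmin ≤ Znorm σ (rhat i)) (hZmin' : Zmin ≤ Znorm σ rstar)
    (α : Fin K → ℝ) (hα : ∀ i, 0 ≤ α i) (hα1 : ∑ i, α i = 1)
    (pbar : X → ℝ) (hpbar : IsProb pbar)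
    (hbary : ∀ q : X → ℝ, IsProb q →
      ∑ i, α i * W2sq pbar (Tshift σ (rhat i)) ≤ ∑ i, α i * W2sq q (Tshift σ (rhat i))) :
    W2 pbar (Tshift σ rstar)
      ≤ (2 * D / Real.sqrt Zmin) * Real.sqrt (∑ i, α i * ε i) := by
  classical
  have hX : Nonempty X := by
    rcases isEmpty_or_nonempty X with h | h
    · exfalso
      have := hpbar.2
      rw [Finset.univ_eq_empty] at this
      simp at this
    · exact h
  set pst := Tshift σ rstar with hpstdef
  have hpst_prob : IsProb pst := Tshift_isProb σ rstar hrstar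
  have hε0 : ∀ i, 0 ≤ ε i := fun i =>
    le_trans (Finset.sum_nonneg fun x _ => abs_nonneg _) (hε i)
  have hS0 : 0 ≤ ∑ i, α i * ε i :=
    Finset.sum_nonneg fun i _ => mul_nonneg (hα i) (hε0 i)
  have hW_i : ∀ i, W2sq (Tshift σ (rhat i)) pst ≤ D ^ 2 / Zmin * ε i := by
    intro i
    have h1 := W2sq_le_tv (Tshift σ (rhat i)) pst (Tshift_isProb σ _ (hrhat i)) hpst_prob D hD
    have h2 := Tshift_lip σ (rhat i) rstar (hrhat i) hrstar Zmin hZmin0 (hZmin i)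
    have h3 : l1 (fun x => Tshift σ (rhat i) x - pst x) ≤ 2 / Zmin * ε i := by
      refine h2.trans ?_
      have : (0:ℝ) ≤ 2 / Zmin := by positivity
      exact mul_le_mul_of_nonneg_left (hε i) this
    calc W2sq (Tshift σ (rhat i)) pst
        ≤ D ^ 2 / 2 * l1 (fun x => Tshift σ (rhat i) x - pst x) := h1
      _ ≤ D ^ 2 / 2 * (2 / Zmin * ε i) := by
          apply mul_le_mul_of_nonneg_left h3 (by positivity)
      _ = D ^ 2 / Zmin * ε i := by
          field_simp
  have hglue : ∀ i, W2sq pbar pst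
      ≤ 2 * W2sq pbar (Tshift σ (rhat i)) + 2 * W2sq (Tshift σ (rhat i)) pst := fun i =>
    W2sq_triangle pbar (Tshift σ (rhat i)) pst hpbar (Tshift_isProb σ _ (hrhat i))
      hpst_prob (Tshift_pos σ _ (hrhat i))
  have main : W2sq pbar pst ≤ 4 * D ^ 2 / Zmin * ∑ i, α i * ε i := by
    calc W2sq pbar pst = ∑ i, α i * W2sq pbar pst := by
          rw [← Finset.sum_mul, hα1, one_mul]
      _ ≤ ∑ i, α i * (2 * W2sq pbar (Tshift σ (rhat i))
            + 2 * W2sq (Tshift σ (rhat i)) pst) :=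
          Finset.sum_le_sum fun i _ => mul_le_mul_of_nonneg_left (hglue i) (hα i)
      _ = 2 * ∑ i, α i * W2sq pbar (Tshift σ (rhat i))
            + 2 * ∑ i, α i * W2sq (Tshift σ (rhat i)) pst := by
          simp only [mul_add, Finset.sum_add_distrib, Finset.mul_sum]
          congr 1 <;> exact Finset.sum_congr rfl fun i _ => by ring
      _ ≤ 2 * ∑ i, α i * W2sq pst (Tshift σ (rhat i))
            + 2 * ∑ i, α i * W2sq (Tshift σ (rhat i)) pst := by
          have := hbary pst hpst_prob
          linarith
      _ = 4 * ∑ i, α i * W2sq (Tshift σ (rhat i)) pst := by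
          have e : ∀ i, W2sq pst (Tshift σ (rhat i)) = W2sq (Tshift σ (rhat i)) pst :=
            fun i => W2sq_symm _ _
          simp only [e]
          ring
      _ ≤ 4 * ∑ i, α i * (D ^ 2 / Zmin * ε i) := by
          apply mul_le_mul_of_nonneg_left _ (by norm_num)
          exact Finset.sum_le_sum fun i _ => mul_le_mul_of_nonneg_left (hW_i i) (hα i)
      _ = 4 * D ^ 2 / Zmin * ∑ i, α i * ε i := by
          have e : ∑ i, α i * (D ^ 2 / Zmin * ε i) = D ^ 2 / Zmin * ∑ i, α i * ε i := by
            rw [Finset.mul_sum]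
            exact Finset.sum_congr rfl fun i _ => by ring
          rw [e]
          ring
  have hfac0 : 0 ≤ 2 * D / Real.sqrt Zmin :=
    div_nonneg (by linarith) (Real.sqrt_nonneg _)
  have main' : W2sq pbar pst ≤ (2 * D / Real.sqrt Zmin) ^ 2 * ∑ i, α i * ε i := by
    have hsq : (2 * D / Real.sqrt Zmin) ^ 2 = 4 * D ^ 2 / Zmin := by
      rw [div_pow, Real.sq_sqrt hZmin0.le]
      ring
    rw [hsq]
    exact main
  unfold W2
  calc Real.sqrt (W2sq pbar pst)
      ≤ Real.sqrt ((2 * D / Real.sqrt Zmin) ^ 2 * ∑ i, α i * ε i) := Real.sqrt_le_sqrt main'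
    _ = (2 * D / Real.sqrt Zmin) * Real.sqrt (∑ i, α i * ε i) := by
        rw [Real.sqrt_mul (sq_nonneg _), Real.sqrt_sq hfac0]
end

section
/- Under the assumptions of the barycenter W₂ bound, define the back-mapped reward r̄ = Z(r*)·p̄ − σ1, where p̄ is the barycenter and Z(r*) = 1ᵀ(r* + σ1). Then ‖r̄ − r*‖₂ ≤ (2√2 · D · Z(r*))/(δ √Z_min) · (Σ_i α_i ε_i)^{1/2}, where δ is the minimum nonzero distance of the finite metric space. -/
/-!
Write `p* = T_σ(r*)` and `pᵢ = T_σ(r̂ᵢ)`, so that `r̄ − r* = Z(r*)(p̄ − p*)`. On a finite metric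
space with all distances in `[δ, D]`, the squared Wasserstein distance is squeezed between
`δ²/2` and `D²/2` times the ℓ¹ distance, and `T_σ` is `2/Z_min`-Lipschitz in ℓ¹. Comparing the
barycenter `p̄` with the competitor `p*` gives
`Σ αᵢ W₂²(p̄, pᵢ) ≤ Σ αᵢ W₂²(p*, pᵢ) ≤ D² Σ αᵢ εᵢ / Z_min`, and the ℓ¹ triangle inequality through
each `pᵢ` then bounds `‖p̄ − p*‖₁`; finally `‖p̄ − p*‖₂² ≤ ‖p̄ − p*‖₁` for probability vectors.
-/

open Finset

/-- ℓ² norm of a vector on a finite index type. -/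
noncomputable def l2 {X : Type*} [Fintype X] (v : X → ℝ) : ℝ := Real.sqrt (∑ x, (v x) ^ 2)

section Vectors

variable {X : Type*} [Fintype X]

lemma l1_nonneg (v : X → ℝ) : 0 ≤ l1 v :=
  sum_nonneg fun _ _ => abs_nonneg _

lemma l1_sub_comm_s6 (μ ν : X → ℝ) : l1 (fun x => μ x - ν x) = l1 (fun x => ν x - μ x) := by
  simp only [l1, abs_sub_comm]

lemma l1_sub_le_add (μ ν ρ : X → ℝ) :
    l1 (fun x => μ x - ν x) ≤ l1 (fun x => μ x - ρ x) + l1 (fun x => ν x - ρ x) := by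
  rw [l1, l1, l1, ← sum_add_distrib]
  exact sum_le_sum fun x _ => (abs_sub_le _ (ρ x) _).trans_eq (by rw [abs_sub_comm (ρ x)])

lemma l2_const_mul (c : ℝ) (v : X → ℝ) : l2 (fun x => c * v x) = |c| * l2 v := by
  simp only [l2, mul_pow, ← mul_sum]
  rw [Real.sqrt_mul (sq_nonneg c), Real.sqrt_sq_eq_abs]

lemma IsProb.nonempty {p : X → ℝ} (hp : IsProb p) : Nonempty X := by
  by_contra h
  rw [not_nonempty_iff] at h
  simpa using hp.2

lemma IsProb.le_one {p : X → ℝ} (hp : IsProb p) (x : X) : p x ≤ 1 :=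
  hp.2 ▸ single_le_sum (fun y _ => hp.1 y) (mem_univ x)

lemma l2_sub_le_sqrt_l1_sub {μ ν : X → ℝ} (hμ : IsProb μ) (hν : IsProb ν) :
    l2 (fun x => μ x - ν x) ≤ Real.sqrt (l1 (fun x => μ x - ν x)) := by
  refine Real.sqrt_le_sqrt (sum_le_sum fun x _ => ?_)
  have h1 : |μ x - ν x| ≤ 1 :=
    abs_sub_le_iff.2 ⟨by linarith [hμ.le_one x, hν.1 x], by linarith [hν.le_one x, hμ.1 x]⟩
  rw [← sq_abs]
  exact pow_le_of_le_one (abs_nonneg _) h1 two_ne_zero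

lemma l2_sub_le_of_sq_mul_l1_sub_le {μ ν : X → ℝ} (hμ : IsProb μ) (hν : IsProb ν) {δ c : ℝ}
    (hδ : 0 < δ) (h : δ ^ 2 * l1 (fun x => μ x - ν x) ≤ 4 * c) :
    l2 (fun x => μ x - ν x) ≤ 2 * Real.sqrt c / δ := by
  have hc : 0 ≤ c := by nlinarith [mul_nonneg (sq_nonneg δ) (l1_nonneg fun x => μ x - ν x)]
  refine (l2_sub_le_sqrt_l1_sub hμ hν).trans (Real.sqrt_le_iff.2 ⟨by positivity, ?_⟩)
  rw [div_pow, mul_pow, Real.sq_sqrt hc, le_div_iff₀ (by positivity)]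
  linarith

lemma mul_sum_div_sum_of_nonneg {a : X → ℝ} (ha : ∀ x, 0 ≤ a x) (x : X) :
    a x * (∑ z, a z) / ∑ z, a z = a x := by
  by_cases h : ∑ z, a z = 0
  · rw [(sum_eq_zero_iff_of_nonneg fun z _ => ha z).1 h x (mem_univ x)]
    simp
  · field_simp

end Vectors

section ShiftNormalize

variable {X : Type*} [Fintype X] {σ : ℝ}

lemma znorm_pos [Nonempty X] {r : X → ℝ} (hr : ∀ x, 0 < r x + σ) : 0 < Znorm σ r :=
  sum_pos (fun x _ => hr x) univ_nonempty

lemma isProb_tshift [Nonempty X] {r : X → ℝ} (hr : ∀ x, 0 < r x + σ) : IsProb (Tshift σ r) := by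
  refine ⟨fun x => div_nonneg (hr x).le (znorm_pos hr).le, ?_⟩
  simp only [Tshift]
  rw [← sum_div, ← Znorm, div_self (znorm_pos hr).ne']

lemma znorm_mul_sub_sub_eq {r : X → ℝ} (hZ : Znorm σ r ≠ 0) (p : X → ℝ) (x : X) :
    Znorm σ r * p x - σ - r x = Znorm σ r * (p x - Tshift σ r x) := by
  rw [Tshift]
  field_simp
  ring

lemma abs_znorm_sub_le (r r' : X → ℝ) :
    |Znorm σ r - Znorm σ r'| ≤ l1 (fun x => r x - r' x) := by
  rw [Znorm, Znorm, ← sum_sub_distrib, l1]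
  simpa only [add_sub_add_right_eq_sub] using abs_sum_le_sum_abs _ _

lemma l1_tshift_sub_le [Nonempty X] {r r' : X → ℝ} (hZ : 0 < Znorm σ r)
    (hr' : ∀ x, 0 < r' x + σ) :
    l1 (fun x => Tshift σ r x - Tshift σ r' x) ≤ 2 / Znorm σ r * l1 (fun x => r x - r' x) := by
  have hp' := isProb_tshift hr'
  have hsplit : ∀ x, Tshift σ r x - Tshift σ r' x = (r x - r' x) / Znorm σ r
      + Tshift σ r' x * ((Znorm σ r' - Znorm σ r) / Znorm σ r) := by
    intro x
    have := (znorm_pos hr').ne'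
    simp only [Tshift]
    field_simp
    ring
  set Z := Znorm σ r
  set Z' := Znorm σ r'
  calc l1 (fun x => Tshift σ r x - Tshift σ r' x)
      ≤ ∑ x, (|r x - r' x| / Z + Tshift σ r' x * (|Z - Z'| / Z)) := by
        refine sum_le_sum fun x _ => ?_
        calc |Tshift σ r x - Tshift σ r' x|
            ≤ |(r x - r' x) / Z| + |Tshift σ r' x * ((Z' - Z) / Z)| :=
              (hsplit x).symm ▸ abs_add_le _ _
          _ = |r x - r' x| / Z + Tshift σ r' x * (|Z - Z'| / Z) := by
              rw [abs_div, abs_mul, abs_div, abs_of_pos hZ, abs_of_nonneg (hp'.1 x),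
                abs_sub_comm Z']
    _ = l1 (fun x => r x - r' x) / Z + |Z - Z'| / Z := by
        rw [sum_add_distrib, ← sum_div, ← sum_mul, hp'.2, one_mul, l1]
    _ ≤ 2 / Z * l1 (fun x => r x - r' x) := by
        have := div_le_div_of_nonneg_right (abs_znorm_sub_le (σ := σ) r r') hZ.le
        rw [div_mul_eq_mul_div, two_mul, add_div]
        linarith

end ShiftNormalize

section Couplings

variable {X : Type*} [Fintype X] {μ ν : X → ℝ}

lemma isCoupling_mul (hμ : IsProb μ) (hν : IsProb ν) : IsCoupling (fun x y => μ x * ν y) μ ν :=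
  ⟨fun x y => mul_nonneg (hμ.1 x) (hν.1 y),
    fun x => by rw [← mul_sum, hν.2, mul_one],
    fun y => by rw [← sum_mul, hμ.2, one_mul]⟩

/-- For `m = min μ ν` this is the total-variation coupling: the common mass stays in place and
the excess of `μ` is spread over the excess of `ν` proportionally. -/
lemma isCoupling_diag_add_excess [DecidableEq X] {m : X → ℝ} (hm : ∀ x, 0 ≤ m x)
    (hmμ : ∀ x, m x ≤ μ x) (hmν : ∀ x, m x ≤ ν x) (hμν : ∑ x, μ x = ∑ x, ν x) :
    IsCoupling (fun x y => (if x = y then m x else 0)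
      + (μ x - m x) * (ν y - m y) / ∑ z, (μ z - m z)) μ ν := by
  have hexcess : ∑ z, (ν z - m z) = ∑ z, (μ z - m z) := by
    rw [sum_sub_distrib, sum_sub_distrib, hμν]
  have hμm : ∀ x, 0 ≤ μ x - m x := fun x => sub_nonneg.2 (hmμ x)
  have hνm : ∀ x, 0 ≤ ν x - m x := fun x => sub_nonneg.2 (hmν x)
  refine ⟨fun x y => add_nonneg ?_ ?_, fun x => ?_, fun y => ?_⟩
  · split_ifs
    exacts [hm x, le_rfl]
  · exact div_nonneg (mul_nonneg (hμm x) (hνm y)) (sum_nonneg fun z _ => hμm z)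
  · rw [sum_add_distrib, sum_ite_eq, if_pos (mem_univ x), ← sum_div, ← mul_sum, hexcess,
      mul_sum_div_sum_of_nonneg hμm, add_sub_cancel]
  · rw [sum_add_distrib, sum_ite_eq', if_pos (mem_univ y), ← sum_div, ← sum_mul,
      ← hexcess, mul_comm, mul_sum_div_sum_of_nonneg hνm, add_sub_cancel]

end Couplings

section Wasserstein

variable {X : Type*} [Fintype X] [MetricSpace X] {μ ν : X → ℝ}

lemma w2sq_le_of_isCoupling {γ : X → X → ℝ} (hγ : IsCoupling γ μ ν) :
    W2sq μ ν ≤ ∑ x, ∑ y, dist x y ^ 2 * γ x y := by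
  refine csInf_le ⟨0, ?_⟩ ⟨γ, hγ, rfl⟩
  rintro _ ⟨γ', hγ', rfl⟩
  exact sum_nonneg fun x _ => sum_nonneg fun y _ => mul_nonneg (sq_nonneg _) (hγ'.1 x y)

lemma le_w2sq_of_forall_isCoupling (hμ : IsProb μ) (hν : IsProb ν) {c : ℝ}
    (h : ∀ γ, IsCoupling γ μ ν → c ≤ ∑ x, ∑ y, dist x y ^ 2 * γ x y) : c ≤ W2sq μ ν := by
  refine le_csInf ⟨_, _, isCoupling_mul hμ hν, rfl⟩ ?_
  rintro _ ⟨γ, hγ, rfl⟩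
  exact h γ hγ

lemma w2sq_le_sq_mul_excess [DecidableEq X] {m : X → ℝ} (hm : ∀ x, 0 ≤ m x)
    (hmμ : ∀ x, m x ≤ μ x) (hmν : ∀ x, m x ≤ ν x) (hμν : ∑ x, μ x = ∑ x, ν x) {D : ℝ}
    (hD : ∀ x y : X, dist x y ≤ D) :
    W2sq μ ν ≤ D ^ 2 * ∑ z, (μ z - m z) := by
  set t := ∑ z, (μ z - m z)
  have hexcess : ∑ z, (ν z - m z) = t := by
    rw [sum_sub_distrib, ← hμν, ← sum_sub_distrib]
  have hμm : ∀ x, 0 ≤ μ x - m x := fun x => sub_nonneg.2 (hmμ x)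
  have hνm : ∀ x, 0 ≤ ν x - m x := fun x => sub_nonneg.2 (hmν x)
  refine (w2sq_le_of_isCoupling (isCoupling_diag_add_excess hm hmμ hmν hμν)).trans ?_
  calc ∑ x, ∑ y, dist x y ^ 2 * ((if x = y then m x else 0) + (μ x - m x) * (ν y - m y) / t)
      ≤ ∑ x, ∑ y, D ^ 2 * ((μ x - m x) * (ν y - m y) / t) := by
        refine sum_le_sum fun x _ => sum_le_sum fun y _ => ?_
        have hexcess_nonneg : 0 ≤ (μ x - m x) * (ν y - m y) / t :=
          div_nonneg (mul_nonneg (hμm x) (hνm y)) (sum_nonneg fun z _ => hμm z)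
        rcases eq_or_ne x y with rfl | hxy
        · simpa using mul_nonneg (sq_nonneg D) hexcess_nonneg
        · rw [if_neg hxy, zero_add]
          exact mul_le_mul_of_nonneg_right (pow_le_pow_left₀ dist_nonneg (hD x y) 2)
            hexcess_nonneg
    _ = D ^ 2 * (t * (∑ y, (ν y - m y)) / t) := by
        rw [sum_mul_sum, sum_div, mul_sum]
        simp only [sum_div, mul_sum]
    _ = D ^ 2 * t := by rw [hexcess, mul_self_div_self]

lemma two_mul_w2sq_le_sq_mul_l1_sub (hμ : IsProb μ) (hν : IsProb ν) {D : ℝ}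
    (hD : ∀ x y : X, dist x y ≤ D) :
    2 * W2sq μ ν ≤ D ^ 2 * l1 (fun x => μ x - ν x) := by
  classical
  have habs : ∀ x, |μ x - ν x| = (μ x - min (μ x) (ν x)) + (ν x - min (μ x) (ν x)) := by
    intro x
    rw [abs_sub_comm, ← max_sub_min_eq_abs]
    linarith [min_add_max (μ x) (ν x)]
  have hl1 : l1 (fun x => μ x - ν x) = 2 * ∑ x, (μ x - min (μ x) (ν x)) := by
    rw [l1, sum_congr rfl fun x _ => habs x, sum_add_distrib, two_mul, sum_sub_distrib ν,
      hν.2, ← hμ.2, ← sum_sub_distrib]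
  have hW := w2sq_le_sq_mul_excess (fun x => le_min (hμ.1 x) (hν.1 x))
    (fun x => min_le_left _ _) (fun x => min_le_right _ _) (hμ.2.trans hν.2.symm) hD
  rw [hl1]
  linarith

lemma sq_mul_l1_sub_le_two_mul_w2sq (hμ : IsProb μ) (hν : IsProb ν) {δ : ℝ} (hδ : 0 ≤ δ)
    (hδmin : ∀ x y : X, x ≠ y → δ ≤ dist x y) :
    δ ^ 2 * l1 (fun x => μ x - ν x) ≤ 2 * W2sq μ ν := by
  suffices h : ∀ γ, IsCoupling γ μ ν →
      δ ^ 2 * l1 (fun x => μ x - ν x) / 2 ≤ ∑ x, ∑ y, dist x y ^ 2 * γ x y by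
    linarith [le_w2sq_of_forall_isCoupling hμ hν h]
  intro γ hγ
  rw [div_le_iff₀ two_pos]
  have hflow : ∀ x, μ x - ν x = ∑ y, (γ x y - γ y x) := fun x => by
    rw [sum_sub_distrib, hγ.2.1, hγ.2.2]
  have hpair : ∀ x y, δ ^ 2 * |γ x y - γ y x|
      ≤ dist x y ^ 2 * γ x y + dist y x ^ 2 * γ y x := by
    intro x y
    rcases eq_or_ne x y with rfl | hxy
    · simp
    have hδd : δ ^ 2 ≤ dist x y ^ 2 := pow_le_pow_left₀ hδ (hδmin x y hxy) 2
    have hxy0 := hγ.1 x y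
    have hyx0 := hγ.1 y x
    rw [dist_comm y x, ← mul_add]
    calc δ ^ 2 * |γ x y - γ y x| ≤ δ ^ 2 * (γ x y + γ y x) :=
          mul_le_mul_of_nonneg_left (abs_sub_le_iff.2 ⟨by linarith, by linarith⟩) (sq_nonneg δ)
      _ ≤ dist x y ^ 2 * (γ x y + γ y x) := mul_le_mul_of_nonneg_right hδd (by linarith)
  calc δ ^ 2 * l1 (fun x => μ x - ν x) = ∑ x, δ ^ 2 * |∑ y, (γ x y - γ y x)| := by
        rw [l1, mul_sum]
        simp only [hflow]
    _ ≤ ∑ x, ∑ y, (dist x y ^ 2 * γ x y + dist y x ^ 2 * γ y x) := by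
        refine sum_le_sum fun x _ => ?_
        calc δ ^ 2 * |∑ y, (γ x y - γ y x)| ≤ ∑ y, δ ^ 2 * |γ x y - γ y x| :=
              (mul_le_mul_of_nonneg_left (abs_sum_le_sum_abs _ _) (sq_nonneg δ)).trans_eq
                (mul_sum _ _ _)
          _ ≤ _ := sum_le_sum fun y _ => hpair x y
    _ = (∑ x, ∑ y, dist x y ^ 2 * γ x y) * 2 := by
        simp only [sum_add_distrib]
        rw [sum_comm (f := fun x y => dist y x ^ 2 * γ y x)]
        ring

lemma w2sq_tshift_le [Nonempty X] {σ D Zmin : ℝ} (hD : ∀ x y : X, dist x y ≤ D) {r r' : X → ℝ}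
    (hr : ∀ x, 0 < r x + σ) (hr' : ∀ x, 0 < r' x + σ) (hZmin0 : 0 < Zmin)
    (hZmin : Zmin ≤ Znorm σ r') :
    W2sq (Tshift σ r) (Tshift σ r') ≤ D ^ 2 / Zmin * l1 (fun x => r' x - r x) := by
  have hlip : l1 (fun x => Tshift σ r' x - Tshift σ r x) ≤ 2 / Zmin * l1 (fun x => r' x - r x) :=
    (l1_tshift_sub_le (hZmin0.trans_le hZmin) hr).trans <| mul_le_mul_of_nonneg_right
      (div_le_div_of_nonneg_left zero_le_two hZmin0 hZmin) (l1_nonneg _)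
  have h2W := two_mul_w2sq_le_sq_mul_l1_sub (isProb_tshift hr) (isProb_tshift hr') hD
  rw [l1_sub_comm_s6] at h2W
  calc W2sq (Tshift σ r) (Tshift σ r')
      ≤ D ^ 2 / 2 * l1 (fun x => Tshift σ r' x - Tshift σ r x) := by linarith
    _ ≤ D ^ 2 / 2 * (2 / Zmin * l1 (fun x => r' x - r x)) := by gcongr
    _ = D ^ 2 / Zmin * l1 (fun x => r' x - r x) := by ring

end Wasserstein

section Barycenter

variable {X ι : Type*} [Fintype X] [MetricSpace X] [Fintype ι]

def IsW2Barycenter (α : ι → ℝ) (p : ι → X → ℝ) (pbar : X → ℝ) : Prop :=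
  IsProb pbar ∧ ∀ q, IsProb q → ∑ i, α i * W2sq pbar (p i) ≤ ∑ i, α i * W2sq q (p i)

lemma IsW2Barycenter.sq_mul_l1_sub_le {α : ι → ℝ} {p : ι → X → ℝ} {pbar : X → ℝ}
    (hbar : IsW2Barycenter α p pbar) (hα : ∀ i, 0 ≤ α i) (hα1 : ∑ i, α i = 1)
    (hp : ∀ i, IsProb (p i)) {q : X → ℝ} (hq : IsProb q) {δ : ℝ} (hδ : 0 ≤ δ)
    (hδmin : ∀ x y : X, x ≠ y → δ ≤ dist x y) :
    δ ^ 2 * l1 (fun x => pbar x - q x) ≤ 4 * ∑ i, α i * W2sq q (p i) := by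
  have hi : ∀ i, δ ^ 2 * l1 (fun x => pbar x - q x)
      ≤ 2 * W2sq pbar (p i) + 2 * W2sq q (p i) := fun i =>
    calc δ ^ 2 * l1 (fun x => pbar x - q x)
        ≤ δ ^ 2 * l1 (fun x => pbar x - p i x) + δ ^ 2 * l1 (fun x => q x - p i x) := by
          rw [← mul_add]
          exact mul_le_mul_of_nonneg_left (l1_sub_le_add _ _ _) (sq_nonneg δ)
      _ ≤ 2 * W2sq pbar (p i) + 2 * W2sq q (p i) :=
          add_le_add (sq_mul_l1_sub_le_two_mul_w2sq hbar.1 (hp i) hδ hδmin)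
            (sq_mul_l1_sub_le_two_mul_w2sq hq (hp i) hδ hδmin)
  calc δ ^ 2 * l1 (fun x => pbar x - q x)
      = ∑ i, α i * (δ ^ 2 * l1 (fun x => pbar x - q x)) := by rw [← sum_mul, hα1, one_mul]
    _ ≤ ∑ i, α i * (2 * W2sq pbar (p i) + 2 * W2sq q (p i)) :=
        sum_le_sum fun i _ => mul_le_mul_of_nonneg_left (hi i) (hα i)
    _ = 2 * ∑ i, α i * W2sq pbar (p i) + 2 * ∑ i, α i * W2sq q (p i) := by
        simp only [mul_add, sum_add_distrib, mul_sum]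
        ring_nf
    _ ≤ 4 * ∑ i, α i * W2sq q (p i) := by linarith [hbar.2 q hq]

end Barycenter

theorem stmt6_general {X : Type*} [Fintype X] [MetricSpace X] {K : ℕ}
    (σ : ℝ)
    (rhat : Fin K → X → ℝ) (rstar : X → ℝ)
    (hrhat : ∀ i x, 0 < rhat i x + σ) (hrstar : ∀ x, 0 < rstar x + σ)
    (ε : Fin K → ℝ) (hε : ∀ i, l1 (fun x => rhat i x - rstar x) ≤ ε i)
    (D : ℝ) (hD : ∀ x y : X, dist x y ≤ D) (hD0 : 0 ≤ D)
    (Zmin : ℝ) (hZmin0 : 0 < Zmin)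
    (hZmin : ∀ i, Zmin ≤ Znorm σ (rhat i))
    (α : Fin K → ℝ) (hα : ∀ i, 0 ≤ α i) (hα1 : ∑ i, α i = 1)
    (δ : ℝ) (hδ : 0 < δ) (hδmin : ∀ x y : X, x ≠ y → δ ≤ dist x y)
    (pbar : X → ℝ) (hpbar : IsProb pbar)
    (hbary : ∀ q : X → ℝ, IsProb q →
      ∑ i, α i * W2sq pbar (Tshift σ (rhat i)) ≤ ∑ i, α i * W2sq q (Tshift σ (rhat i))) :
    l2 (fun x => (Znorm σ rstar * pbar x - σ) - rstar x)
      ≤ (2 * Real.sqrt 2 * D * Znorm σ rstar) / (δ * Real.sqrt Zmin)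
          * Real.sqrt (∑ i, α i * ε i) := by
  have : Nonempty X := hpbar.nonempty
  set S := ∑ i, α i * ε i
  have hZ := znorm_pos hrstar
  have hpstar := isProb_tshift hrstar
  have hl1 : δ ^ 2 * l1 (fun x => pbar x - Tshift σ rstar x) ≤ 4 * (D ^ 2 / Zmin * S) := by
    refine (IsW2Barycenter.sq_mul_l1_sub_le ⟨hpbar, hbary⟩ hα hα1
      (fun i => isProb_tshift (hrhat i)) hpstar hδ.le hδmin).trans ?_
    gcongr 4 * ?_
    calc ∑ i, α i * W2sq (Tshift σ rstar) (Tshift σ (rhat i))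
        ≤ ∑ i, α i * (D ^ 2 / Zmin * ε i) := sum_le_sum fun i _ =>
          mul_le_mul_of_nonneg_left ((w2sq_tshift_le hD hrstar (hrhat i) hZmin0 (hZmin i)).trans
            (mul_le_mul_of_nonneg_left (hε i) (by positivity))) (hα i)
      _ = D ^ 2 / Zmin * S := by
          rw [mul_sum]
          exact sum_congr rfl fun i _ => by ring
  calc l2 (fun x => (Znorm σ rstar * pbar x - σ) - rstar x)
      = Znorm σ rstar * l2 (fun x => pbar x - Tshift σ rstar x) := by
        simp only [znorm_mul_sub_sub_eq hZ.ne', l2_const_mul, abs_of_pos hZ]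
    _ ≤ Znorm σ rstar * (2 * Real.sqrt (D ^ 2 / Zmin * S) / δ) := by
        gcongr
        exact l2_sub_le_of_sq_mul_l1_sub_le hpbar hpstar hδ hl1
    _ = 2 * D * Znorm σ rstar / (δ * Real.sqrt Zmin) * Real.sqrt S * 1 := by
        rw [Real.sqrt_mul (by positivity), Real.sqrt_div (sq_nonneg D), Real.sqrt_sq hD0]
        ring
    _ ≤ 2 * D * Znorm σ rstar / (δ * Real.sqrt Zmin) * Real.sqrt S * Real.sqrt 2 := by
        gcongr
        exact Real.one_le_sqrt.2 one_le_two
    _ = _ := by ring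

/-- reward-space error bound for the back-mapped barycentric reward
`r̄ = Z(r*)·p̄ − σ1`. -/
theorem stmt6 {X : Type*} [Fintype X] [MetricSpace X] {K : ℕ}
    (σ : ℝ) (hσ : 0 < σ)
    (rhat : Fin K → X → ℝ) (rstar : X → ℝ)
    (hrhat : ∀ i x, 0 < rhat i x + σ) (hrstar : ∀ x, 0 < rstar x + σ)
    (ε : Fin K → ℝ) (hε : ∀ i, l1 (fun x => rhat i x - rstar x) ≤ ε i)
    (D : ℝ) (hD : ∀ x y : X, dist x y ≤ D) (hD0 : 0 ≤ D)
    (Zmin : ℝ) (hZmin0 : 0 < Zmin)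
    (hZmin : ∀ i, Zmin ≤ Znorm σ (rhat i)) (hZmin' : Zmin ≤ Znorm σ rstar)
    (α : Fin K → ℝ) (hα : ∀ i, 0 ≤ α i) (hα1 : ∑ i, α i = 1)
    (δ : ℝ) (hδ : 0 < δ) (hδmin : ∀ x y : X, x ≠ y → δ ≤ dist x y)
    (pbar : X → ℝ) (hpbar : IsProb pbar)
    (hbary : ∀ q : X → ℝ, IsProb q →
      ∑ i, α i * W2sq pbar (Tshift σ (rhat i)) ≤ ∑ i, α i * W2sq q (Tshift σ (rhat i))) :
    l2 (fun x => (Znorm σ rstar * pbar x - σ) - rstar x)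
      ≤ (2 * Real.sqrt 2 * D * Znorm σ rstar) / (δ * Real.sqrt Zmin)
          * Real.sqrt (∑ i, α i * ε i) :=
  stmt6_general σ rhat rstar hrhat hrstar ε hε D hD hD0 Zmin hZmin0 hZmin α hα hα1 δ hδ hδmin pbar
    hpbar hbary
end

section
/- Combining the reward-space bound and the policy-performance bound: under the assumptions of the barycentric fusion theorem, for every client i the suboptimality of the policy π_{r̄} induced by the fused reward r̄ satisfies J_i(π_{r*}; r*) − J_i(π_{r̄}; r*) ≤ (4√2 · D · Z(r*))/((1−γ)·δ·√Z_min) · (Σ_{j=1}^K α_j ε_j)^{1/2}. -/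
open Finset

namespace Stmt9Aux

open Finset

variable {X : Type*} [Fintype X]

/-- positive part mass of μ - ν -/
noncomputable def Tpos (μ ν : X → ℝ) : ℝ := ∑ x, max (μ x - ν x) 0

lemma Tpos_nonneg (μ ν : X → ℝ) : 0 ≤ Tpos μ ν :=
  Finset.sum_nonneg fun _ _ => le_max_right _ _

lemma Tpos_symm {μ ν : X → ℝ} (hμ : ∑ x, μ x = 1) (hν : ∑ x, ν x = 1) :
    Tpos μ ν = Tpos ν μ := by
  have h : Tpos μ ν - Tpos ν μ = ∑ x, (μ x - ν x) := by
    rw [Tpos, Tpos, ← Finset.sum_sub_distrib]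
    refine Finset.sum_congr rfl fun x _ => ?_
    rcases le_total (μ x) (ν x) with h | h
    · rw [max_eq_right (by linarith), max_eq_left (by linarith)]; ring
    · rw [max_eq_left (by linarith), max_eq_right (by linarith)]; ring
  have h2 : ∑ x, (μ x - ν x) = 0 := by rw [Finset.sum_sub_distrib, hμ, hν]; ring
  linarith

lemma le_Tpos (μ ν : X → ℝ) (x : X) : μ x - ν x ≤ Tpos μ ν := by
  calc μ x - ν x ≤ max (μ x - ν x) 0 := le_max_left _ _
  _ ≤ Tpos μ ν := Finset.single_le_sum (f := fun x => max (μ x - ν x) 0)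
      (fun _ _ => le_max_right _ _) (mem_univ x)

lemma abs_sub_le_Tpos {μ ν : X → ℝ} (hμ : ∑ x, μ x = 1) (hν : ∑ x, ν x = 1) (x : X) :
    |μ x - ν x| ≤ Tpos μ ν := by
  rw [abs_le]
  constructor
  · have := le_Tpos ν μ x
    rw [Tpos_symm hν hμ] at this
    linarith
  · exact le_Tpos μ ν x

lemma Tpos_le_one {μ ν : X → ℝ} (hμ0 : ∀ x, 0 ≤ μ x) (hμ : ∑ x, μ x = 1)
    (hν : ∀ x, 0 ≤ ν x) : Tpos μ ν ≤ 1 := by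
  rw [← hμ]
  refine Finset.sum_le_sum fun x _ => ?_
  have h1 := hν x
  have h2 := hμ0 x
  rcases le_total (μ x - ν x) 0 with h | h
  · rw [max_eq_right h]; exact h2
  · rw [max_eq_left h]; linarith

end Stmt9Aux
namespace Stmt9Aux

open Finset

variable {X : Type*} [Fintype X] [MetricSpace X]

lemma cost_nonneg {γ : X → X → ℝ} (hγ : ∀ x y, 0 ≤ γ x y) :
    0 ≤ ∑ x, ∑ y, dist x y ^ 2 * γ x y :=
  Finset.sum_nonneg fun x _ => Finset.sum_nonneg fun y _ =>
    mul_nonneg (sq_nonneg _) (hγ x y)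

lemma W2sq_bddBelow (μ ν : X → ℝ) :
    BddBelow {c | ∃ γ, IsCoupling γ μ ν ∧ c = ∑ x, ∑ y, dist x y ^ 2 * γ x y} := by
  refine ⟨0, fun c hc => ?_⟩
  obtain ⟨γ, hγ, rfl⟩ := hc
  exact cost_nonneg hγ.1

lemma W2sq_le_cost {μ ν : X → ℝ} {γ : X → X → ℝ} (hγ : IsCoupling γ μ ν) :
    W2sq μ ν ≤ ∑ x, ∑ y, dist x y ^ 2 * γ x y :=
  csInf_le (W2sq_bddBelow μ ν) ⟨γ, hγ, rfl⟩

lemma prod_coupling {μ ν : X → ℝ} (hμ : IsProb μ) (hν : IsProb ν) :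
    IsCoupling (fun x y => μ x * ν y) μ ν := by
  refine ⟨fun x y => mul_nonneg (hμ.1 x) (hν.1 y), fun x => ?_, fun y => ?_⟩
  · rw [← Finset.mul_sum, hν.2, mul_one]
  · rw [← Finset.sum_mul, hμ.2, one_mul]

lemma le_W2sq {μ ν : X → ℝ} (hμ : IsProb μ) (hν : IsProb ν) {c : ℝ}
    (h : ∀ γ, IsCoupling γ μ ν → c ≤ ∑ x, ∑ y, dist x y ^ 2 * γ x y) :
    c ≤ W2sq μ ν := by
  refine le_csInf ⟨_, fun x y => μ x * ν y, prod_coupling hμ hν, rfl⟩ ?_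
  rintro b ⟨γ, hγ, rfl⟩
  exact h γ hγ

lemma W2sq_nonneg {μ ν : X → ℝ} (hμ : IsProb μ) (hν : IsProb ν) : 0 ≤ W2sq μ ν :=
  le_W2sq hμ hν fun γ hγ => cost_nonneg hγ.1

end Stmt9Aux
namespace Stmt9Aux

open Finset

variable {X : Type*} [Fintype X] [MetricSpace X] [DecidableEq X]

lemma deltasq_Tpos_le_W2sq {μ ν : X → ℝ} (hμ : IsProb μ) (hν : IsProb ν)
    {δ : ℝ} (hδ : 0 < δ) (hδmin : ∀ x y : X, x ≠ y → δ ≤ dist x y) :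
    δ ^ 2 * Tpos μ ν ≤ W2sq μ ν := by
  refine le_W2sq hμ hν fun γ hγ => ?_
  rw [Tpos, Finset.mul_sum]
  refine Finset.sum_le_sum fun x _ => ?_
  -- key pointwise: δ^2 * max (μ x - ν x) 0 ≤ ∑ y, d x y ^2 γ x y
  have hrow : μ x - ν x = ∑ y ∈ univ.erase x, γ x y - ∑ y ∈ univ.erase x, γ y x := by
    have h1 : ∑ y ∈ univ.erase x, γ x y + γ x x = μ x := by
      rw [Finset.sum_erase_add univ _ (mem_univ x), hγ.2.1 x]
    have h2 : ∑ y ∈ univ.erase x, γ y x + γ x x = ν x := by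
      rw [Finset.sum_erase_add univ (fun y => γ y x) (mem_univ x), hγ.2.2 x]
    linarith
  have hstep1 : max (μ x - ν x) 0 ≤ ∑ y ∈ univ.erase x, γ x y := by
    have h0 : 0 ≤ ∑ y ∈ univ.erase x, γ x y :=
      Finset.sum_nonneg fun y _ => hγ.1 x y
    have h1 : 0 ≤ ∑ y ∈ univ.erase x, γ y x :=
      Finset.sum_nonneg fun y _ => hγ.1 y x
    rw [hrow]
    exact max_le (by linarith) h0
  calc δ ^ 2 * max (μ x - ν x) 0 ≤ δ ^ 2 * ∑ y ∈ univ.erase x, γ x y := by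
        exact mul_le_mul_of_nonneg_left hstep1 (sq_nonneg δ)
    _ = ∑ y ∈ univ.erase x, δ ^ 2 * γ x y := by rw [Finset.mul_sum]
    _ ≤ ∑ y ∈ univ.erase x, dist x y ^ 2 * γ x y := by
        refine Finset.sum_le_sum fun y hy => ?_
        have hxy : x ≠ y := (Finset.ne_of_mem_erase hy).symm
        have hd := hδmin x y hxy
        have : δ ^ 2 ≤ dist x y ^ 2 := by nlinarith [dist_nonneg (x := x) (y := y)]
        exact mul_le_mul_of_nonneg_right this (hγ.1 x y)
    _ ≤ ∑ y, dist x y ^ 2 * γ x y := by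
        refine Finset.sum_le_sum_of_subset_of_nonneg (Finset.erase_subset _ _)
          fun y _ _ => mul_nonneg (sq_nonneg _) (hγ.1 x y)

lemma W2sq_le_D2_Tpos {μ ν : X → ℝ} (hμ : IsProb μ) (hν : IsProb ν)
    {D : ℝ} (hD : ∀ x y : X, dist x y ≤ D) (hD0 : 0 ≤ D) :
    W2sq μ ν ≤ D ^ 2 * Tpos μ ν := by
  by_cases hT : Tpos μ ν = 0
  · -- then μ = ν; diagonal coupling has zero cost
    have hμν : ∀ x, μ x = ν x := by
      have hle : ∀ x, μ x ≤ ν x := by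
        intro x
        have := (Finset.sum_eq_zero_iff_of_nonneg
          (fun x _ => le_max_right (μ x - ν x) 0)).mp hT x (mem_univ x)
        have h2 : μ x - ν x ≤ max (μ x - ν x) 0 := le_max_left _ _
        linarith [h2.trans_eq this]
      by_contra hcon
      push_neg at hcon
      obtain ⟨x0, hx0⟩ := hcon
      have hlt : μ x0 < ν x0 := lt_of_le_of_ne (hle x0) hx0
      have : ∑ x, μ x < ∑ x, ν x :=
        Finset.sum_lt_sum (fun x _ => hle x) ⟨x0, mem_univ x0, hlt⟩
      rw [hμ.2, hν.2] at this
      exact lt_irrefl 1 this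
    have hc : IsCoupling (fun x y => if x = y then μ x else 0) μ ν := by
      refine ⟨fun x y => ?_, fun x => ?_, fun y => ?_⟩
      · dsimp only
        split
        · exact hμ.1 x
        · exact le_rfl
      · simp
      · simp [hμν y]
    have := W2sq_le_cost hc
    calc W2sq μ ν ≤ ∑ x, ∑ y, dist x y ^ 2 * (if x = y then μ x else 0) := this
      _ = 0 := by
          refine Finset.sum_eq_zero fun x _ => Finset.sum_eq_zero fun y _ => ?_
          by_cases h : x = y
          · subst h; simp
          · simp [h]
      _ ≤ D ^ 2 * Tpos μ ν := mul_nonneg (sq_nonneg D) (Tpos_nonneg μ ν)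
  · -- T > 0 : TV-optimal style coupling
    have hT0 : 0 < Tpos μ ν := lt_of_le_of_ne (Tpos_nonneg μ ν) (Ne.symm hT)
    set T := Tpos μ ν with hTdef
    set f : X → ℝ := fun x => max (μ x - ν x) 0 with hf
    set g : X → ℝ := fun x => max (ν x - μ x) 0 with hg
    have hf0 : ∀ x, 0 ≤ f x := fun x => le_max_right _ _
    have hg0 : ∀ x, 0 ≤ g x := fun x => le_max_right _ _
    have hsf : ∑ x, f x = T := rfl
    have hsg : ∑ x, g x = T := (Tpos_symm hν.2 hμ.2).trans rfl
    have hfg : ∀ x, min (μ x) (ν x) + f x = μ x := by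
      intro x
      rcases le_total (μ x) (ν x) with h | h
      · rw [min_eq_left h, hf]; simp only [max_eq_right (by linarith : μ x - ν x ≤ 0)]; ring
      · rw [min_eq_right h, hf]; simp only [max_eq_left (by linarith : (0:ℝ) ≤ μ x - ν x)]; ring
    have hfg' : ∀ x, min (μ x) (ν x) + g x = ν x := by
      intro x
      rcases le_total (μ x) (ν x) with h | h
      · rw [min_eq_left h, hg]; simp only [max_eq_left (by linarith : (0:ℝ) ≤ ν x - μ x)]; ring
      · rw [min_eq_right h, hg]; simp only [max_eq_right (by linarith : ν x - μ x ≤ 0)]; ring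
    set γ : X → X → ℝ := fun x y => (if x = y then min (μ x) (ν x) else 0) + f x * g y / T
      with hγdef
    have hc : IsCoupling γ μ ν := by
      refine ⟨fun x y => ?_, fun x => ?_, fun y => ?_⟩
      · have : 0 ≤ f x * g y / T := div_nonneg (mul_nonneg (hf0 x) (hg0 y)) hT0.le
        simp only [hγdef]
        split
        · have : 0 ≤ min (μ x) (ν x) := le_min (by linarith [hfg x, hf0 x, hμ.1 x]) (hν.1 x)
          positivity
        · simpa using this
      · rw [hγdef]
        simp only []
        rw [Finset.sum_add_distrib]
        have h1 : ∑ y, (if x = y then min (μ x) (ν x) else 0) = min (μ x) (ν x) := by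
          simp
        have h2 : ∑ y, f x * g y / T = f x := by
          rw [← Finset.sum_div, ← Finset.mul_sum, hsg, mul_div_assoc,
            div_self (ne_of_gt hT0), mul_one]
        rw [h1, h2, hfg x]
      · rw [hγdef]
        simp only []
        rw [Finset.sum_add_distrib]
        have h1 : ∑ x, (if x = y then min (μ x) (ν x) else 0) = min (μ y) (ν y) := by
          rw [Finset.sum_ite_eq' univ y (fun x => min (μ x) (ν x))]
          simp
        have h2 : ∑ x, f x * g y / T = g y := by
          rw [← Finset.sum_div, ← Finset.sum_mul, hsf, mul_comm, mul_div_assoc,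
            div_self (ne_of_gt hT0), mul_one]
        rw [h1, h2, hfg' y]
    calc W2sq μ ν ≤ ∑ x, ∑ y, dist x y ^ 2 * γ x y := W2sq_le_cost hc
      _ ≤ D ^ 2 * T := by
          have key : ∀ x y : X, dist x y ^ 2 * γ x y ≤ D ^ 2 * (f x * g y / T) := by
            intro x y
            have hfgT : 0 ≤ f x * g y / T := div_nonneg (mul_nonneg (hf0 x) (hg0 y)) hT0.le
            by_cases h : x = y
            · subst h
              simp only [hγdef, if_pos rfl, dist_self]
              ring_nf
              positivity
            · have hd := hD x y
              have hdn : (0:ℝ) ≤ dist x y := dist_nonneg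
              have hsq : dist x y ^ 2 ≤ D ^ 2 := by nlinarith
              simp only [hγdef, if_neg h, zero_add]
              exact mul_le_mul_of_nonneg_right hsq hfgT |>.trans
                (le_of_eq rfl)
          calc ∑ x, ∑ y, dist x y ^ 2 * γ x y
              ≤ ∑ x, ∑ y, D ^ 2 * (f x * g y / T) :=
                Finset.sum_le_sum fun x _ => Finset.sum_le_sum fun y _ => key x y
            _ = D ^ 2 * T := by
                have hmul : ∑ x, ∑ y, D ^ 2 * (f x * g y / T)
                    = D ^ 2 * ∑ x, ∑ y, f x * g y / T := by
                  rw [Finset.mul_sum]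
                  exact Finset.sum_congr rfl fun x _ => by rw [Finset.mul_sum]
                rw [hmul]
                congr 1
                calc ∑ x, ∑ y, f x * g y / T = ∑ x, f x * T / T := by
                      refine Finset.sum_congr rfl fun x _ => ?_
                      rw [← Finset.sum_div, ← Finset.mul_sum, hsg]
                  _ = ∑ x, f x := by
                      refine Finset.sum_congr rfl fun x _ => ?_
                      rw [mul_div_assoc, div_self (ne_of_gt hT0), mul_one]
                  _ = T := hsf

end Stmt9Aux
namespace Stmt9Aux

open Finset

variable {X : Type*} [Fintype X] [MetricSpace X]

lemma glue_cost {μ ν ρ : X → ℝ} (hνpos : ∀ x, 0 < ν x)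
    {γ1 γ2 : X → X → ℝ} (h1 : IsCoupling γ1 μ ν) (h2 : IsCoupling γ2 ν ρ) :
    W2sq μ ρ ≤ 2 * (∑ x, ∑ y, dist x y ^ 2 * γ1 x y)
      + 2 * (∑ x, ∑ y, dist x y ^ 2 * γ2 x y) := by
  set γ : X → X → ℝ := fun x z => ∑ y, γ1 x y * γ2 y z / ν y with hγdef
  have hνne : ∀ y : X, ν y ≠ 0 := fun y => ne_of_gt (hνpos y)
  have hc : IsCoupling γ μ ρ := by
    refine ⟨fun x z => Finset.sum_nonneg fun y _ =>
      div_nonneg (mul_nonneg (h1.1 x y) (h2.1 y z)) (hνpos y).le, fun x => ?_, fun z => ?_⟩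
    · rw [hγdef]
      simp only []
      rw [Finset.sum_comm]
      calc ∑ y, ∑ z, γ1 x y * γ2 y z / ν y
          = ∑ y, γ1 x y * ν y / ν y := by
            refine Finset.sum_congr rfl fun y _ => ?_
            rw [← Finset.sum_div, ← Finset.mul_sum, h2.2.1 y]
        _ = ∑ y, γ1 x y := Finset.sum_congr rfl fun y _ => by
            rw [mul_div_assoc, div_self (hνne y), mul_one]
        _ = μ x := h1.2.1 x
    · rw [hγdef]
      simp only []
      rw [Finset.sum_comm]
      calc ∑ y, ∑ x, γ1 x y * γ2 y z / ν y
          = ∑ y, ν y * γ2 y z / ν y := by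
            refine Finset.sum_congr rfl fun y _ => ?_
            rw [← Finset.sum_div, ← Finset.sum_mul, h1.2.2 y]
        _ = ∑ y, γ2 y z := Finset.sum_congr rfl fun y _ => by
            rw [mul_comm, mul_div_assoc, div_self (hνne y), mul_one]
        _ = ρ z := h2.2.2 z
  refine (W2sq_le_cost hc).trans ?_
  have expand : ∑ x, ∑ z, dist x z ^ 2 * γ x z
      = ∑ x, ∑ z, ∑ y, dist x z ^ 2 * (γ1 x y * γ2 y z / ν y) := by
    refine Finset.sum_congr rfl fun x _ => Finset.sum_congr rfl fun z _ => ?_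
    rw [hγdef]
    exact Finset.mul_sum _ _ _
  rw [expand]
  have ptwise : ∀ x z y : X, dist x z ^ 2 * (γ1 x y * γ2 y z / ν y)
      ≤ (2 * dist x y ^ 2 + 2 * dist y z ^ 2) * (γ1 x y * γ2 y z / ν y) := by
    intro x z y
    have hw : 0 ≤ γ1 x y * γ2 y z / ν y :=
      div_nonneg (mul_nonneg (h1.1 x y) (h2.1 y z)) (hνpos y).le
    have htri : dist x z ≤ dist x y + dist y z := dist_triangle x y z
    have hsq : dist x z ^ 2 ≤ 2 * dist x y ^ 2 + 2 * dist y z ^ 2 := by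
      nlinarith [dist_nonneg (x := x) (y := z), dist_nonneg (x := x) (y := y),
        dist_nonneg (x := y) (y := z), sq_nonneg (dist x y - dist y z)]
    exact mul_le_mul_of_nonneg_right hsq hw
  calc ∑ x, ∑ z, ∑ y, dist x z ^ 2 * (γ1 x y * γ2 y z / ν y)
      ≤ ∑ x, ∑ z, ∑ y, (2 * dist x y ^ 2 + 2 * dist y z ^ 2) * (γ1 x y * γ2 y z / ν y) :=
        Finset.sum_le_sum fun x _ => Finset.sum_le_sum fun z _ =>
          Finset.sum_le_sum fun y _ => ptwise x z y
    _ = (∑ x, ∑ z, ∑ y, 2 * dist x y ^ 2 * (γ1 x y * γ2 y z / ν y))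
        + ∑ x, ∑ z, ∑ y, 2 * dist y z ^ 2 * (γ1 x y * γ2 y z / ν y) := by
        rw [← Finset.sum_add_distrib]
        refine Finset.sum_congr rfl fun x _ => ?_
        rw [← Finset.sum_add_distrib]
        refine Finset.sum_congr rfl fun z _ => ?_
        rw [← Finset.sum_add_distrib]
        refine Finset.sum_congr rfl fun y _ => ?_
        ring
    _ ≤ 2 * (∑ x, ∑ y, dist x y ^ 2 * γ1 x y) + 2 * (∑ x, ∑ y, dist x y ^ 2 * γ2 x y) := by
        have e1 : (∑ x, ∑ z, ∑ y, 2 * dist x y ^ 2 * (γ1 x y * γ2 y z / ν y))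
            = 2 * (∑ x, ∑ y, dist x y ^ 2 * γ1 x y) := by
          rw [Finset.mul_sum]
          refine Finset.sum_congr rfl fun x _ => ?_
          rw [Finset.sum_comm, Finset.mul_sum]
          refine Finset.sum_congr rfl fun y _ => ?_
          calc ∑ z, 2 * dist x y ^ 2 * (γ1 x y * γ2 y z / ν y)
              = 2 * dist x y ^ 2 * γ1 x y / ν y * ∑ z, γ2 y z := by
                rw [Finset.mul_sum]
                refine Finset.sum_congr rfl fun z _ => ?_
                ring
            _ = 2 * (dist x y ^ 2 * γ1 x y) := by
                rw [h2.2.1 y, div_mul_cancel₀ _ (hνne y)]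
                ring
        have e2 : (∑ x, ∑ z, ∑ y, 2 * dist y z ^ 2 * (γ1 x y * γ2 y z / ν y))
            = 2 * (∑ x, ∑ y, dist x y ^ 2 * γ2 x y) := by
          rw [Finset.sum_comm]
          calc ∑ z, ∑ x, ∑ y, 2 * dist y z ^ 2 * (γ1 x y * γ2 y z / ν y)
              = ∑ z, ∑ y, ∑ x, 2 * dist y z ^ 2 * (γ1 x y * γ2 y z / ν y) := by
                exact Finset.sum_congr rfl fun z _ => Finset.sum_comm
            _ = ∑ z, ∑ y, 2 * (dist y z ^ 2 * γ2 y z) := by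
                refine Finset.sum_congr rfl fun z _ => Finset.sum_congr rfl fun y _ => ?_
                calc ∑ x, 2 * dist y z ^ 2 * (γ1 x y * γ2 y z / ν y)
                    = 2 * dist y z ^ 2 * γ2 y z / ν y * ∑ x, γ1 x y := by
                      rw [Finset.mul_sum]
                      refine Finset.sum_congr rfl fun x _ => ?_
                      ring
                  _ = 2 * (dist y z ^ 2 * γ2 y z) := by
                      rw [h1.2.2 y, div_mul_cancel₀ _ (hνne y)]
                      ring
            _ = 2 * (∑ x, ∑ y, dist x y ^ 2 * γ2 x y) := by
                rw [Finset.mul_sum, Finset.sum_comm]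
                refine Finset.sum_congr rfl fun y _ => ?_
                rw [Finset.mul_sum]
        rw [e1, e2]
  done

lemma W2sq_triangle {μ ν ρ : X → ℝ} (hμ : IsProb μ) (hν : IsProb ν) (hρ : IsProb ρ)
    (hνpos : ∀ x, 0 < ν x) :
    W2sq μ ρ ≤ 2 * W2sq μ ν + 2 * W2sq ν ρ := by
  set S1 := {c | ∃ γ, IsCoupling γ μ ν ∧ c = ∑ x, ∑ y, dist x y ^ 2 * γ x y} with hS1
  set S2 := {c | ∃ γ, IsCoupling γ ν ρ ∧ c = ∑ x, ∑ y, dist x y ^ 2 * γ x y} with hS2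
  have hS1ne : S1.Nonempty := ⟨_, fun x y => μ x * ν y, prod_coupling hμ hν, rfl⟩
  have hS2ne : S2.Nonempty := ⟨_, fun x y => ν x * ρ y, prod_coupling hν hρ, rfl⟩
  have key : ∀ c1 ∈ S1, ∀ c2 ∈ S2, W2sq μ ρ ≤ 2 * c1 + 2 * c2 := by
    rintro c1 ⟨γ1, hγ1, rfl⟩ c2 ⟨γ2, hγ2, rfl⟩
    exact glue_cost hνpos hγ1 hγ2
  have step1 : ∀ c1 ∈ S1, W2sq μ ρ ≤ 2 * c1 + 2 * sInf S2 := by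
    intro c1 hc1
    have : (W2sq μ ρ - 2 * c1) / 2 ≤ sInf S2 := by
      refine le_csInf hS2ne fun c2 hc2 => ?_
      have := key c1 hc1 c2 hc2
      linarith
    linarith
  have step2 : (W2sq μ ρ - 2 * sInf S2) / 2 ≤ sInf S1 := by
    refine le_csInf hS1ne fun c1 hc1 => ?_
    have := step1 c1 hc1
    linarith
  have hW1 : W2sq μ ν = sInf S1 := rfl
  have hW2 : W2sq ν ρ = sInf S2 := rfl
  rw [hW1, hW2]
  linarith

end Stmt9Aux
namespace Stmt9Aux

open Finset

variable {X : Type*} [Fintype X]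

lemma Znorm_pos [Nonempty X] {σ : ℝ} {r : X → ℝ} (h : ∀ x, 0 < r x + σ) :
    0 < Znorm σ r :=
  Finset.sum_pos (fun x _ => h x) Finset.univ_nonempty

lemma Tshift_pos [Nonempty X] {σ : ℝ} {r : X → ℝ} (h : ∀ x, 0 < r x + σ) (x : X) :
    0 < Tshift σ r x :=
  div_pos (h x) (Znorm_pos h)

lemma Tshift_isProb [Nonempty X] {σ : ℝ} {r : X → ℝ} (h : ∀ x, 0 < r x + σ) :
    IsProb (Tshift σ r) := by
  refine ⟨fun x => (Tshift_pos h x).le, ?_⟩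
  simp only [Tshift]
  rw [← Finset.sum_div]
  exact div_self (ne_of_gt (Znorm_pos h))

lemma Tpos_Tshift_le [Nonempty X] {σ : ℝ} {r1 r2 : X → ℝ}
    (h1 : ∀ x, 0 < r1 x + σ) (h2 : ∀ x, 0 < r2 x + σ)
    (hle : Znorm σ r2 ≤ Znorm σ r1) :
    Tpos (Tshift σ r1) (Tshift σ r2) ≤ (∑ x, |r1 x - r2 x|) / Znorm σ r1 := by
  have hZ1 : 0 < Znorm σ r1 := Znorm_pos h1
  have hZ2 : 0 < Znorm σ r2 := Znorm_pos h2
  rw [Tpos, Finset.sum_div]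
  refine Finset.sum_le_sum fun x _ => ?_
  refine max_le ?_ (div_nonneg (abs_nonneg _) hZ1.le)
  have hmono : (r2 x + σ) / Znorm σ r1 ≤ (r2 x + σ) / Znorm σ r2 :=
    div_le_div_of_nonneg_left (h2 x).le hZ2 hle
  have key : Tshift σ r1 x - Tshift σ r2 x ≤ (r1 x - r2 x) / Znorm σ r1 := by
    simp only [Tshift]
    have heq : (r1 x - r2 x) / Znorm σ r1
        = (r1 x + σ) / Znorm σ r1 - (r2 x + σ) / Znorm σ r1 := by
      rw [div_sub_div_same]; ring_nf
    rw [heq]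
    linarith
  calc Tshift σ r1 x - Tshift σ r2 x ≤ (r1 x - r2 x) / Znorm σ r1 := key
    _ ≤ |r1 x - r2 x| / Znorm σ r1 := by
        gcongr
        exact le_abs_self _

end Stmt9Aux
open Stmt9Aux in
/-- end-to-end suboptimality bound for the policy induced by the fused reward. -/
theorem stmt9 {X : Type*} [Fintype X] [MetricSpace X] {K : ℕ}
    (σ : ℝ) (hσ : 0 < σ)
    (rhat : Fin K → X → ℝ) (rstar : X → ℝ)
    (hrhat : ∀ i x, 0 < rhat i x + σ) (hrstar : ∀ x, 0 < rstar x + σ)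
    (ε : Fin K → ℝ) (hε : ∀ i, l1 (fun x => rhat i x - rstar x) ≤ ε i)
    (D : ℝ) (hD : ∀ x y : X, dist x y ≤ D) (hD0 : 0 ≤ D)
    (Zmin : ℝ) (hZmin0 : 0 < Zmin)
    (hZmin : ∀ i, Zmin ≤ Znorm σ (rhat i)) (hZmin' : Zmin ≤ Znorm σ rstar)
    (α : Fin K → ℝ) (hα : ∀ i, 0 ≤ α i) (hα1 : ∑ i, α i = 1)
    (δ : ℝ) (hδ : 0 < δ) (hδmin : ∀ x y : X, x ≠ y → δ ≤ dist x y)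
    (pbar : X → ℝ) (hpbar : IsProb pbar)
    (hbary : ∀ q : X → ℝ, IsProb q →
      ∑ i, α i * W2sq pbar (Tshift σ (rhat i)) ≤ ∑ i, α i * W2sq q (Tshift σ (rhat i)))
    {P : Type*} (ρ : P → X → ℝ) (hρ : ∀ π, IsProb (ρ π))
    (γ : ℝ) (hγ0 : 0 < γ) (hγ1 : γ < 1)
    (J : P → (X → ℝ) → ℝ)
    (hJ : ∀ π r, J π r = (1 / (1 - γ)) * ∑ x, ρ π x * r x)
    (rbar : X → ℝ) (hrbar : rbar = fun x => Znorm σ rstar * pbar x - σ)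
    (πstar πbar : P)
    (hπstar : ∀ π, J π rstar ≤ J πstar rstar) (hπbar : ∀ π, J π rbar ≤ J πbar rbar) :
    J πstar rstar - J πbar rstar
      ≤ (4 * Real.sqrt 2 * D * Znorm σ rstar) / ((1 - γ) * δ * Real.sqrt Zmin)
          * Real.sqrt (∑ i, α i * ε i) := by
  classical
  rcases isEmpty_or_nonempty X with hX | hX
  · exfalso
    have h2 := hpbar.2
    simp at h2
  have h1γ : (0:ℝ) < 1 - γ := by linarith
  set Zs := Znorm σ rstar with hZsdef
  have hZs : 0 < Zs := Znorm_pos hrstar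
  set pstar := Tshift σ rstar with hpstardef
  have hpstarP : IsProb pstar := Tshift_isProb hrstar
  have hphatP : ∀ i, IsProb (Tshift σ (rhat i)) := fun i => Tshift_isProb (hrhat i)
  have hphatpos : ∀ i x, 0 < Tshift σ (rhat i) x := fun i => Tshift_pos (hrhat i)
  have hε0 : ∀ i, 0 ≤ ε i := fun i =>
    le_trans (Finset.sum_nonneg fun x _ => abs_nonneg _) (hε i)
  set S := ∑ i, α i * ε i with hSdef
  have hS0 : 0 ≤ S := Finset.sum_nonneg fun i _ => mul_nonneg (hα i) (hε0 i)
  -- per-client bound on Tpos between pstar and phat i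
  have hTi : ∀ i, Tpos pstar (Tshift σ (rhat i)) ≤ ε i / Zmin := by
    intro i
    have hl1 : (∑ x, |rhat i x - rstar x|) = l1 (fun x => rhat i x - rstar x) := rfl
    rcases le_total (Znorm σ rstar) (Znorm σ (rhat i)) with hc | hc
    · rw [Tpos_symm hpstarP.2 (hphatP i).2]
      calc Tpos (Tshift σ (rhat i)) pstar
          ≤ (∑ x, |rhat i x - rstar x|) / Znorm σ (rhat i) :=
            Tpos_Tshift_le (hrhat i) hrstar hc
        _ ≤ ε i / Zmin := by
            rw [hl1]
            gcongr <;>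
              first
                | exact hε0 i
                | exact hε i
                | exact hZmin i
                | exact hZmin0
    · calc Tpos pstar (Tshift σ (rhat i))
          ≤ (∑ x, |rstar x - rhat i x|) / Znorm σ rstar :=
            Tpos_Tshift_le hrstar (hrhat i) hc
        _ = (∑ x, |rhat i x - rstar x|) / Znorm σ rstar := by
            congr 1
            exact Finset.sum_congr rfl fun x _ => abs_sub_comm _ _
        _ ≤ ε i / Zmin := by
            rw [hl1]
            gcongr <;>
              first
                | exact hε0 i
                | exact hε i
                | exact hZmin'
                | exact hZmin0
  have hTi' : ∀ i, Tpos (Tshift σ (rhat i)) pstar ≤ ε i / Zmin := fun i => by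
    rw [← Tpos_symm hpstarP.2 (hphatP i).2]; exact hTi i
  have hW2i : ∀ i, W2sq pstar (Tshift σ (rhat i)) ≤ D ^ 2 * (ε i / Zmin) := fun i =>
    (W2sq_le_D2_Tpos hpstarP (hphatP i) hD hD0).trans
      (mul_le_mul_of_nonneg_left (hTi i) (sq_nonneg D))
  have hW2i' : ∀ i, W2sq (Tshift σ (rhat i)) pstar ≤ D ^ 2 * (ε i / Zmin) := fun i =>
    (W2sq_le_D2_Tpos (hphatP i) hpstarP hD hD0).trans
      (mul_le_mul_of_nonneg_left (hTi' i) (sq_nonneg D))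
  have hsumform : ∑ i, α i * (D ^ 2 * (ε i / Zmin)) = D ^ 2 * (S / Zmin) := by
    rw [hSdef, Finset.sum_div, Finset.mul_sum]
    exact Finset.sum_congr rfl fun i _ => by ring
  -- barycenter property with q = pstar
  have hbar : ∑ i, α i * W2sq pbar (Tshift σ (rhat i)) ≤ D ^ 2 * (S / Zmin) := by
    refine (hbary pstar hpstarP).trans ?_
    rw [← hsumform]
    exact Finset.sum_le_sum fun i _ => mul_le_mul_of_nonneg_left (hW2i i) (hα i)
  have hbar' : ∑ i, α i * W2sq (Tshift σ (rhat i)) pstar ≤ D ^ 2 * (S / Zmin) := by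
    rw [← hsumform]
    exact Finset.sum_le_sum fun i _ => mul_le_mul_of_nonneg_left (hW2i' i) (hα i)
  -- triangle inequality through each phat i, averaged
  set W := W2sq pbar pstar with hWdef
  have hWb : W ≤ 4 * (D ^ 2 * (S / Zmin)) := by
    have htri : ∀ i, W ≤ 2 * W2sq pbar (Tshift σ (rhat i))
        + 2 * W2sq (Tshift σ (rhat i)) pstar := fun i =>
      W2sq_triangle hpbar (hphatP i) hpstarP (hphatpos i)
    calc W = ∑ i, α i * W := by rw [← Finset.sum_mul, hα1, one_mul]
      _ ≤ ∑ i, α i * (2 * W2sq pbar (Tshift σ (rhat i))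
            + 2 * W2sq (Tshift σ (rhat i)) pstar) :=
          Finset.sum_le_sum fun i _ => mul_le_mul_of_nonneg_left (htri i) (hα i)
      _ = 2 * (∑ i, α i * W2sq pbar (Tshift σ (rhat i)))
            + 2 * (∑ i, α i * W2sq (Tshift σ (rhat i)) pstar) := by
          rw [Finset.mul_sum, Finset.mul_sum, ← Finset.sum_add_distrib]
          exact Finset.sum_congr rfl fun i _ => by ring
      _ ≤ 2 * (D ^ 2 * (S / Zmin)) + 2 * (D ^ 2 * (S / Zmin)) := by
          have := hbar
          have := hbar'
          gcongr
      _ = 4 * (D ^ 2 * (S / Zmin)) := by ring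
  -- TV-type bound
  set Tb := Tpos pbar pstar with hTbdef
  have hTb0 : 0 ≤ Tb := Tpos_nonneg _ _
  have hTb1 : Tb ≤ 1 := Tpos_le_one hpbar.1 hpbar.2 hpstarP.1
  have hTbW : δ ^ 2 * Tb ≤ W := deltasq_Tpos_le_W2sq hpbar hpstarP hδ hδmin
  set B := 2 * D * Real.sqrt S / (δ * Real.sqrt Zmin) with hBdef
  have hB0 : 0 ≤ B := by positivity
  have hTbB : Tb ≤ B := by
    have hB2 : B ^ 2 = 4 * D ^ 2 * S / (δ ^ 2 * Zmin) := by
      rw [hBdef, div_pow, mul_pow, mul_pow, mul_pow, Real.sq_sqrt hS0,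
        Real.sq_sqrt hZmin0.le]
      ring
    have hTle : Tb ≤ W / δ ^ 2 := by
      rw [le_div_iff₀ (by positivity)]
      linarith
    have hT2 : Tb ^ 2 ≤ B ^ 2 := by
      rw [hB2]
      calc Tb ^ 2 = Tb * Tb := sq Tb
        _ ≤ 1 * (W / δ ^ 2) := mul_le_mul hTb1 hTle hTb0 zero_le_one
        _ = W / δ ^ 2 := one_mul _
        _ ≤ 4 * (D ^ 2 * (S / Zmin)) / δ ^ 2 := by gcongr
        _ = 4 * D ^ 2 * S / (δ ^ 2 * Zmin) := by
            field_simp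
    calc Tb = Real.sqrt (Tb ^ 2) := (Real.sqrt_sq hTb0).symm
      _ ≤ Real.sqrt (B ^ 2) := Real.sqrt_le_sqrt hT2
      _ = B := Real.sqrt_sq hB0
  -- pointwise reward bound
  have habs : ∀ x, |rstar x - rbar x| ≤ Zs * Tb := by
    intro x
    have hpt : rstar x - rbar x = Zs * (pstar x - pbar x) := by
      rw [hrbar]
      simp only [hpstardef, Tshift, ← hZsdef]
      rw [mul_sub, mul_div_cancel₀ _ (ne_of_gt hZs)]
      ring
    rw [hpt, abs_mul, abs_of_pos hZs]
    refine mul_le_mul_of_nonneg_left ?_ hZs.le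
    have h := abs_sub_le_Tpos hpbar.2 hpstarP.2 x
    rw [abs_sub_comm]
    exact h
  -- J difference bounds
  have hJd : ∀ π (v w : X → ℝ), J π v - J π w
      = (1 / (1 - γ)) * ∑ x, ρ π x * (v x - w x) := by
    intro π v w
    rw [hJ, hJ, ← mul_sub, ← Finset.sum_sub_distrib]
    congr 1
    exact Finset.sum_congr rfl fun x _ => by ring
  have hsum : ∀ π (v w : X → ℝ), (∀ x, |v x - w x| ≤ Zs * Tb) →
      ∑ x, ρ π x * (v x - w x) ≤ Zs * Tb := by
    intro π v w hvw
    calc ∑ x, ρ π x * (v x - w x) ≤ ∑ x, ρ π x * (Zs * Tb) := by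
          refine Finset.sum_le_sum fun x _ => ?_
          refine mul_le_mul_of_nonneg_left ?_ ((hρ π).1 x)
          exact le_trans (le_abs_self _) (hvw x)
      _ = Zs * Tb := by rw [← Finset.sum_mul, (hρ π).2, one_mul]
  have e1 : J πstar rstar - J πstar rbar ≤ (1 / (1 - γ)) * (Zs * Tb) := by
    rw [hJd]
    refine mul_le_mul_of_nonneg_left (hsum πstar rstar rbar habs) ?_
    positivity
  have e2 : J πbar rbar - J πbar rstar ≤ (1 / (1 - γ)) * (Zs * Tb) := by
    rw [hJd]
    refine mul_le_mul_of_nonneg_left (hsum πbar rbar rstar ?_) ?_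
    · intro x
      rw [abs_sub_comm]
      exact habs x
    · positivity
  have e3 : J πstar rbar ≤ J πbar rbar := hπbar πstar
  have gap : J πstar rstar - J πbar rstar ≤ (2 / (1 - γ)) * (Zs * Tb) := by
    have h2e : (2 / (1 - γ)) * (Zs * Tb)
        = (1 / (1 - γ)) * (Zs * Tb) + (1 / (1 - γ)) * (Zs * Tb) := by ring
    linarith
  -- final arithmetic
  have hsZ : 0 < Real.sqrt Zmin := Real.sqrt_pos.mpr hZmin0
  have hsS : 0 ≤ Real.sqrt S := Real.sqrt_nonneg S
  have h2le : (1:ℝ) ≤ Real.sqrt 2 := by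
    rw [show (1:ℝ) = Real.sqrt 1 by simp]
    exact Real.sqrt_le_sqrt (by norm_num)
  calc J πstar rstar - J πbar rstar ≤ (2 / (1 - γ)) * (Zs * Tb) := gap
    _ ≤ (2 / (1 - γ)) * (Zs * B) := by gcongr
    _ = 4 * (D * Zs * Real.sqrt S / ((1 - γ) * δ * Real.sqrt Zmin)) := by
        rw [hBdef]
        field_simp
        ring
    _ ≤ (4 * Real.sqrt 2) * (D * Zs * Real.sqrt S / ((1 - γ) * δ * Real.sqrt Zmin)) := by
        have hpos : 0 ≤ D * Zs * Real.sqrt S / ((1 - γ) * δ * Real.sqrt Zmin) := by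
          positivity
        nlinarith
    _ = (4 * Real.sqrt 2 * D * Zs) / ((1 - γ) * δ * Real.sqrt Zmin) * Real.sqrt S := by
        field_simp
end
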